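/- arXiv:2604.10822 — 15 statements merged into one kernel-verified Lean document; each statement's English description precedes it below -/
import Mathlib

section
/- The sequence a(n) = ⌊(n+1)/√2⌋ (with a(k) = 0 for k < 1) satisfies a(a(n) + a(n-1)) = n for all integers n ≥ 1. -/
/-!
Write `x = (n + 1) / √2` and `y = n / √2`. Then `x - y = 1 / √2` lies strictly between `1/2` and `1`,
so `⌊x⌋ - ⌊y⌋ ∈ {0, 1}`, and a case check shows `2y ≤ ⌊x⌋ + ⌊y⌋ + 1 < 2x`, the strict inequality
using that `x` is irrational. Since `2y = n√2` and `2x = (n + 1)√2`, this says exactly that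
`⌊(⌊x⌋ + ⌊y⌋ + 1) / √2⌋ = n`.
-/

open Real

lemma floor_eq_or_eq_floor_add_one {x y : ℝ} (hyx : y ≤ x) (hxy : x ≤ y + 1) :
    ⌊x⌋ = ⌊y⌋ ∨ ⌊x⌋ = ⌊y⌋ + 1 := by
  have h₁ : ⌊y⌋ ≤ ⌊x⌋ := Int.floor_mono hyx
  have h₂ : ⌊x⌋ ≤ ⌊y⌋ + 1 := by simpa using Int.floor_mono hxy
  omega

section FloorSum

variable {x y : ℝ}

lemma two_mul_le_floor_add_floor_add_one (h : 1 / 2 < x - y) :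
    2 * y ≤ ⌊x⌋ + ⌊y⌋ + 1 := by
  have hx := Int.lt_floor_add_one x
  have hy := Int.lt_floor_add_one y
  rcases le_or_gt ⌊x⌋ ⌊y⌋ with hle | hlt
  · linarith [(Int.cast_le (R := ℝ)).2 hle]
  · have : (⌊y⌋ : ℝ) + 1 ≤ ⌊x⌋ := by exact_mod_cast hlt
    linarith

lemma floor_add_floor_add_one_lt_two_mul (h₁ : 1 / 2 < x - y) (h₂ : x - y ≤ 1)
    (hx : Irrational x) : (⌊x⌋ + ⌊y⌋ + 1 : ℝ) < 2 * x := by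
  have hxk : (⌊x⌋ : ℝ) < x := (Int.floor_le x).lt_of_ne (hx.ne_int _).symm
  have hyl : (⌊y⌋ : ℝ) ≤ y := Int.floor_le y
  rcases floor_eq_or_eq_floor_add_one (x := x) (y := y) (by linarith) (by linarith) with heq | heq
  · rw [heq]; linarith
  · have : (⌊x⌋ : ℝ) = ⌊y⌋ + 1 := by exact_mod_cast heq
    linarith

end FloorSum

lemma floor_floor_add_floor_div_sqrt_two {n : ℤ} (hn : n + 1 ≠ 0) :
    ⌊((⌊((n : ℝ) + 1) / √2⌋ + ⌊(n : ℝ) / √2⌋ : ℤ) + 1 : ℝ) / √2⌋ = n := by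
  have hs : 0 < √2 := by positivity
  have hss : √2 ^ 2 = 2 := sq_sqrt zero_le_two
  have hs1 : 1 < √2 := one_lt_sqrt_two
  have hs2 : √2 < 3 / 2 := sqrt_two_lt_three_halves
  have hgap : ((n : ℝ) + 1) / √2 - n / √2 = √2 / 2 := by field_simp; rw [hss]; ring
  have hirr : Irrational (((n : ℝ) + 1) / √2) := by
    exact_mod_cast irrational_sqrt_two.intCast_div hn
  have hlow := two_mul_le_floor_add_floor_add_one
    (x := ((n : ℝ) + 1) / √2) (y := n / √2) (by rw [hgap]; linarith)
  have hup := floor_add_floor_add_one_lt_two_mul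
    (x := ((n : ℝ) + 1) / √2) (y := n / √2) (by rw [hgap]; linarith) (by rw [hgap]; linarith) hirr
  rw [Int.floor_eq_iff, le_div_iff₀ hs, div_lt_iff₀ hs]
  push_cast
  constructor
  · calc (n : ℝ) * √2 = 2 * (n / √2) := by field_simp; rw [hss]
      _ ≤ _ := hlow
  · calc _ < 2 * (((n : ℝ) + 1) / √2) := hup
      _ = ((n : ℝ) + 1) * √2 := by field_simp; rw [hss]; ring

theorem stmt0
    (a : ℤ → ℤ)
    (ha : ∀ n : ℤ, 1 ≤ n → a n = ⌊((n : ℝ) + 1) / Real.sqrt 2⌋)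
    (ha0 : ∀ n : ℤ, n < 1 → a n = 0) :
    ∀ n : ℤ, 1 ≤ n → a (a n + a (n - 1)) = n := by
  intro n hn
  have hn' : (1 : ℝ) ≤ n := by exact_mod_cast hn
  have hs2 : √2 < 2 := sqrt_two_lt_three_halves.trans (by norm_num)
  have hprev : a (n - 1) = ⌊(n : ℝ) / √2⌋ := by
    rcases hn.eq_or_lt with rfl | hlt
    · rw [ha0 _ (by norm_num), eq_comm, Int.floor_eq_zero_iff]
      exact ⟨by positivity, by simpa using inv_lt_one_of_one_lt₀ one_lt_sqrt_two⟩
    · simpa using ha (n - 1) (by omega)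
  have hcur_pos : 1 ≤ a n := by
    rw [ha n hn, Int.le_floor, le_div_iff₀ (by positivity)]
    push_cast; linarith
  have hprev_nonneg : 0 ≤ a (n - 1) := by
    rw [hprev]; exact Int.floor_nonneg.2 (by positivity)
  rw [ha _ (by omega), ha n hn, hprev]
  exact floor_floor_add_floor_div_sqrt_two (by omega)
end

section
/- If φ : ℝ → ℝ is continuous, nondecreasing, and satisfies φ(∑_{j=0}^{r-1} φ(x-j)) = x for all x, then φ is strictly increasing, a homeomorphism of ℝ, and φ⁻¹(x) = ∑_{j=0}^{r-1} φ(x-j) for all x. -/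
open Real Finset

theorem stmt2 (r : ℕ) (hr : 2 ≤ r)
    (φ : ℝ → ℝ) (hcont : Continuous φ) (hmono : Monotone φ)
    (heq : ∀ x : ℝ, φ (∑ j ∈ Finset.range r, φ (x - j)) = x) :
    StrictMono φ ∧ Function.Bijective φ ∧
    (∀ x : ℝ, Function.invFun φ x = ∑ j ∈ Finset.range r, φ (x - j)) := by
  set g : ℝ → ℝ := fun x => ∑ j ∈ Finset.range r, φ (x - j) with hg
  have hli : Function.LeftInverse φ g := heq
  have hgmono : Monotone g := by
    intro a b hab
    exact Finset.sum_le_sum fun j _ => hmono (by linarith)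
  have hgcont : Continuous g := by
    apply continuous_finset_sum
    intro j _
    exact hcont.comp (continuous_id.sub continuous_const)
  -- g is unbounded above and below
  have habove : ∀ y : ℝ, ∃ x, y ≤ g x := by
    intro y
    by_contra h
    push_neg at h
    have h1 : φ y + 1 = φ (g (φ y + 1)) := (heq _).symm
    have h2 : φ (g (φ y + 1)) ≤ φ y := hmono (h _).le
    linarith
  have hbelow : ∀ y : ℝ, ∃ x, g x ≤ y := by
    intro y
    by_contra h
    push_neg at h
    have h1 : φ y - 1 = φ (g (φ y - 1)) := (heq _).symm
    have h2 : φ y ≤ φ (g (φ y - 1)) := hmono (h _).le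
    linarith
  have hgsurj : Function.Surjective g := by
    intro y
    obtain ⟨a, ha⟩ := hbelow y
    obtain ⟨b, hb⟩ := habove y
    rcases le_total a b with hab | hab
    · obtain ⟨x, _, hx⟩ := intermediate_value_Icc hab hgcont.continuousOn ⟨ha, hb⟩
      exact ⟨x, hx⟩
    · exact ⟨b, le_antisymm ((hgmono hab).trans ha) hb⟩
  have hri : Function.RightInverse φ g := by
    intro y
    obtain ⟨x, rfl⟩ := hgsurj y
    rw [hli x]
  have hφinj : Function.Injective φ := hri.injective
  have hφsurj : Function.Surjective φ := hli.surjective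
  refine ⟨hmono.strictMono_of_injective hφinj, ⟨hφinj, hφsurj⟩, ?_⟩
  intro x
  apply hφinj
  rw [Function.invFun_eq (hφsurj x)]
  exact (heq x).symm
end

section
/- Let r ≥ 2 be a non-square integer, α = √r, a(n) = ⌊n/α + α/2⌋, S(n) = ∑_{j=0}^{r-1} a(n-j), and Φ(n) = ∑_{j=0}^{r-1} {(n-j)/α + α/2} (fractional parts). Then for all n ≥ r, a(S(n)) = n if and only if (r - α)/2 < Φ(n) ≤ (r + α)/2. -/
open Real Finset

theorem stmt3 (r : ℕ) (hr : 2 ≤ r) (hns : ¬ IsSquare r)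
    (a : ℤ → ℤ)
    (ha : ∀ n : ℤ, a n = ⌊(n : ℝ) / Real.sqrt r + Real.sqrt r / 2⌋)
    (S : ℤ → ℤ) (hS : ∀ n : ℤ, S n = ∑ j ∈ Finset.range r, a (n - j))
    (Φ : ℤ → ℝ)
    (hΦ : ∀ n : ℤ, Φ n = ∑ j ∈ Finset.range r,
      Int.fract (((n : ℝ) - j) / Real.sqrt r + Real.sqrt r / 2)) :
    ∀ n : ℤ, (r : ℤ) ≤ n →
      (a (S n) = n ↔ ((r : ℝ) - Real.sqrt r) / 2 < Φ n ∧
        Φ n ≤ ((r : ℝ) + Real.sqrt r) / 2) := by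
  intro n hn
  have hr0 : (0:ℝ) < r := by exact_mod_cast (by omega : 0 < r)
  have hα0 : 0 < Real.sqrt r := Real.sqrt_pos.mpr hr0
  set α := Real.sqrt r with hαdef
  have hα2 : α * α = r := Real.mul_self_sqrt hr0.le
  have hG : (∑ j ∈ Finset.range r, (j:ℝ)) = (r:ℝ) * ((r:ℝ) - 1) / 2 := by
    have h := Finset.sum_range_id_mul_two r
    have h' : ((∑ j ∈ Finset.range r, j : ℕ) : ℝ) * 2 = (r:ℝ) * ((r:ℝ) - 1) := by
      have hc : ((r * (r-1) : ℕ) : ℝ) = (r:ℝ) * ((r:ℝ) - 1) := by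
        push_cast [Nat.cast_sub (by omega : 1 ≤ r)]; ring
      rw [← hc]; exact_mod_cast congrArg (fun k : ℕ => (k:ℝ)) h
    rw [Nat.cast_sum] at h'
    linarith [h']
  have hSval : (S n : ℝ)
      = ((r:ℝ) * n - (r:ℝ) * ((r:ℝ)-1)/2)/α + (r:ℝ)*α/2 - Φ n := by
    have hterm : ∀ j ∈ Finset.range r, ((a (n - j) : ℝ))
        = (((n:ℝ) - j)/α + α/2) - Int.fract (((n:ℝ) - j)/α + α/2) := by
      intro j _
      rw [ha]
      push_cast
      rw [Int.self_sub_fract]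
    have hy : ∑ j ∈ Finset.range r, (((n:ℝ) - j)/α + α/2)
        = ((r:ℝ)*n - (r:ℝ)*((r:ℝ)-1)/2)/α + (r:ℝ)*α/2 := by
      rw [Finset.sum_add_distrib, ← Finset.sum_div, Finset.sum_sub_distrib,
        Finset.sum_const, Finset.sum_const, Finset.card_range, hG,
        nsmul_eq_mul, nsmul_eq_mul]
      ring
    rw [hS, hΦ]
    push_cast
    rw [Finset.sum_congr rfl hterm, Finset.sum_sub_distrib, hy]
  have hx : (S n : ℝ)/α + α/2 = (n:ℝ) + (1 + α)/2 - Φ n / α := by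
    rw [hSval, ← hα2]
    field_simp
    ring
  have e1 : Φ n / α ≤ (1 + α)/2 ↔ Φ n ≤ ((r:ℝ) + α)/2 := by
    rw [div_le_iff₀ hα0]
    constructor <;> intro h <;> nlinarith [hα2]
  have e2 : (α - 1)/2 < Φ n / α ↔ ((r:ℝ) - α)/2 < Φ n := by
    rw [lt_div_iff₀ hα0]
    constructor <;> intro h <;> nlinarith [hα2]
  rw [ha, hx, Int.floor_eq_iff]
  push_cast
  constructor
  · rintro ⟨h1, h2⟩
    refine ⟨e2.mp (by linarith), e1.mp (by linarith)⟩
  · rintro ⟨h1, h2⟩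
    have h1' := e2.mpr h1
    have h2' := e1.mpr h2
    constructor <;> linarith
end

section
/- Let r ≥ 2 be a non-square integer, c = 1/√r, α = √r, s = ⌊α⌋, β = α - s, and N(r) = #{1 ≤ j ≤ r-1 : {j/α} < β}. Then 2·∑_{j=1}^{r-1} ⌊jc⌋ = (r-1)(s-1) + N(r). -/
open Real Finset

/-!
Pair the summand at `j` with the one at `r - j`: the two arguments add up to `j / √r + (r - j) / √r = √r`,
and `⌊x⌋ + ⌊y⌋` equals `⌊x + y⌋` or `⌊x + y⌋ - 1` according as `{x} ≤ {x + y}` or not. Irrationality of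
`(r - j) / √r` rules out `{j / √r} = {√r}`, so every pair contributes `s - 1`, plus one exactly when
`{j / √r} < β`. Summing over `j` counts every summand twice.
-/

theorem Int.floor_add_floor_eq_ite {R : Type*} [CommRing R] [LinearOrder R] [IsStrictOrderedRing R]
    [FloorRing R] (x y : R) :
    ⌊x⌋ + ⌊y⌋ = ⌊x + y⌋ - 1 + if Int.fract x ≤ Int.fract (x + y) then 1 else 0 := by
  have hy : y = ((⌊x + y⌋ - ⌊x⌋ : ℤ) : R) + (Int.fract (x + y) - Int.fract x) := by
    push_cast [Int.fract]; ring
  have hfloor : ⌊y⌋ = ⌊x + y⌋ - ⌊x⌋ + ⌊Int.fract (x + y) - Int.fract x⌋ := by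
    rw [← Int.floor_intCast_add, ← hy]
  have hx0 := Int.fract_nonneg x
  have hx1 := Int.fract_lt_one x
  have hxy0 := Int.fract_nonneg (x + y)
  have hxy1 := Int.fract_lt_one (x + y)
  split_ifs with h
  · have : ⌊Int.fract (x + y) - Int.fract x⌋ = 0 :=
      Int.floor_eq_zero_iff.2 ⟨by linarith, by linarith⟩
    rw [hfloor, this]; ring
  · have : ⌊Int.fract (x + y) - Int.fract x⌋ = -1 :=
      Int.floor_eq_iff.2 ⟨by push_cast; linarith, by push_cast; linarith [not_le.1 h]⟩
    rw [hfloor, this]; ring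

theorem Int.fract_le_fract_add_iff_of_irrational (x : ℝ) {y : ℝ} (hy : Irrational y) :
    Int.fract x ≤ Int.fract (x + y) ↔ Int.fract x < Int.fract (x + y) := by
  refine ⟨fun h => h.lt_of_ne fun heq => hy ?_, le_of_lt⟩
  obtain ⟨z, hz⟩ := Int.fract_eq_fract.1 heq
  exact ⟨((-z : ℤ) : ℚ), by push_cast; linarith⟩

theorem Finset.sum_Icc_one_reflect {M : Type*} [AddCommMonoid M] (f : ℕ → M) (n : ℕ) :
    ∑ j ∈ Icc 1 (n - 1), f (n - j) = ∑ j ∈ Icc 1 (n - 1), f j := by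
  refine sum_nbij' (n - ·) (n - ·) ?_ ?_ ?_ ?_ fun _ _ => rfl <;>
    intro j hj <;> simp only [mem_Icc] at hj ⊢ <;> omega

theorem floor_div_sqrt_add_floor_div_sqrt {r j : ℕ} (hns : ¬ IsSquare r) (hj : j ∈ Icc 1 (r - 1)) :
    ⌊(j : ℝ) * (1 / √r)⌋ + ⌊((r - j : ℕ) : ℝ) * (1 / √r)⌋
      = ⌊√r⌋ - 1 + if Int.fract ((j : ℝ) / √r) < √r - ⌊√r⌋ then 1 else 0 := by
  rw [mem_Icc] at hj
  have hirr : Irrational (((r - j : ℕ) : ℝ) / √r) := by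
    simpa [div_eq_mul_inv] using
      (irrational_sqrt_natCast_iff.2 hns).inv.natCast_mul (by omega : r - j ≠ 0)
  have hsum : (j : ℝ) / √r + ((r - j : ℕ) : ℝ) / √r = √r := by
    rw [Nat.cast_sub (by omega), ← add_div, add_sub_cancel, div_sqrt]
  simp only [mul_one_div, Int.floor_add_floor_eq_ite,
    Int.fract_le_fract_add_iff_of_irrational _ hirr]
  rw [hsum, Int.self_sub_floor]

theorem stmt4 (r : ℕ) (hr : 2 ≤ r) (hns : ¬ IsSquare r)
    (s : ℤ) (hs : s = ⌊Real.sqrt r⌋)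
    (β : ℝ) (hβ : β = Real.sqrt r - s)
    (N : ℕ)
    (hN : N = ((Finset.Icc 1 (r - 1)).filter
      (fun j : ℕ => Int.fract ((j : ℝ) / Real.sqrt r) < β)).card) :
    2 * ∑ j ∈ Finset.Icc 1 (r - 1), ⌊(j : ℝ) * (1 / Real.sqrt r)⌋
      = ((r : ℤ) - 1) * (s - 1) + N := by
  subst hs hβ hN
  calc 2 * ∑ j ∈ Icc 1 (r - 1), ⌊(j : ℝ) * (1 / √r)⌋
      = ∑ j ∈ Icc 1 (r - 1), (⌊(j : ℝ) * (1 / √r)⌋ + ⌊((r - j : ℕ) : ℝ) * (1 / √r)⌋) := by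
        rw [sum_add_distrib, sum_Icc_one_reflect (fun j : ℕ => ⌊(j : ℝ) * (1 / √r)⌋), two_mul]
    _ = ∑ j ∈ Icc 1 (r - 1),
          (⌊√r⌋ - 1 + if Int.fract ((j : ℝ) / √r) < √r - ⌊√r⌋ then 1 else 0) :=
        sum_congr rfl fun j hj => floor_div_sqrt_add_floor_div_sqrt hns hj
    _ = ((r : ℤ) - 1) * (⌊√r⌋ - 1) + _ := by
        rw [sum_add_distrib, sum_const, Nat.card_Icc, sum_boole, nsmul_eq_mul]
        push_cast [Nat.cast_sub (by omega : 1 ≤ r)]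
        ring
end

section
/- Let r ≥ 2 be a non-square integer, α = √r, s = ⌊α⌋, β = α - s, and write r = s² + t with 1 ≤ t ≤ 2s. Then ⌊sβ⌋ = ⌊(t-1)/2⌋. -/
open Real

theorem stmt5 (r : ℕ) (hr : 2 ≤ r) (hns : ¬ IsSquare r)
    (s t : ℤ) (hs : s = ⌊Real.sqrt r⌋)
    (β : ℝ) (hβ : β = Real.sqrt r - s)
    (hrt : (r : ℤ) = s ^ 2 + t) (ht1 : 1 ≤ t) (ht2 : t ≤ 2 * s) :
    ⌊(s : ℝ) * β⌋ = (t - 1) / 2 := by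
  have hirr : Irrational (Real.sqrt r) := irrational_sqrt_natCast_iff.mpr hns
  have hfr : β = Int.fract (Real.sqrt r) := by rw [hβ, hs, Int.fract]
  have hβ0 : 0 < β := by
    rw [hfr, Int.fract_pos]
    exact fun h => hirr.ne_int _ h
  have hβ1 : β < 1 := hfr ▸ Int.fract_lt_one _
  have hsq : Real.sqrt r ^ 2 = r := Real.sq_sqrt (by positivity)
  have key : β ^ 2 + 2 * s * β = t := by
    have h2 : Real.sqrt r ^ 2 = (s : ℝ) ^ 2 + t := by rw [hsq]; exact_mod_cast hrt
    rw [hβ]; linear_combination h2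
  set m : ℤ := (t - 1) / 2 with hm
  have hb1 : 2 * m + 1 ≤ t := by omega
  have hb2 : t ≤ 2 * m + 2 := by omega
  have c1 : 2 * (m : ℝ) + 1 ≤ (t : ℝ) := by exact_mod_cast hb1
  have c2 : (t : ℝ) ≤ 2 * (m : ℝ) + 2 := by exact_mod_cast hb2
  rw [Int.floor_eq_iff]
  constructor
  · nlinarith
  · push_cast
    nlinarith
end

section
/- Let r ≥ 2 be a non-square integer, α = √r, s = ⌊α⌋, β = α - s, and N(r) = #{1 ≤ j ≤ r-1 : {j/α} < β}, r = s² + t with 1 ≤ t ≤ 2s. Then N(r) = (s+1)(t-1) - 2·∑_{k=1}^{s} ⌊kβ⌋. -/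
/-!
For `0 ≤ j < r` put `m = ⌊j/α⌋`, which lies in `[0, s]`. The condition `{j/α} < β` says exactly
`mα ≤ j < (m + β)α`, and since `α = s + β` and `α² = r` the right end is `r - (s - m)α`. Counting
integers in these half-open intervals gives `∑_{m=0}^{s} (t - ⌊(s - m)β⌋ - ⌈mβ⌉)`; as `β` is
irrational, `⌈mβ⌉ = ⌊mβ⌋ + 1` for `m ≥ 1`, and removing `j = 0` yields the formula.
-/

open Real Finset

theorem fract_lt_and_floor_eq_iff {R : Type*} [CommRing R] [LinearOrder R] [IsStrictOrderedRing R]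
    [FloorRing R] {β : R} (hβ : β ≤ 1) (y : R) (m : ℤ) :
    Int.fract y < β ∧ ⌊y⌋ = m ↔ m ≤ y ∧ y < m + β := by
  constructor
  · rintro ⟨hfract, rfl⟩
    exact ⟨Int.floor_le y, by rw [Int.fract] at hfract; linarith⟩
  · rintro ⟨hle, hlt⟩
    have hfloor : ⌊y⌋ = m := Int.floor_eq_iff.mpr ⟨hle, by linarith⟩
    exact ⟨by rw [Int.fract, hfloor]; linarith, hfloor⟩

theorem filter_range_mem_Ico_eq_Ico {R : Type*} [Semiring R] [LinearOrder R] [FloorSemiring R]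
    {x y : R} {n : ℕ} (hy : ⌈y⌉₊ ≤ n) :
    (range n).filter (fun j : ℕ => x ≤ j ∧ (j : R) < y) = Ico ⌈x⌉₊ ⌈y⌉₊ := by
  ext j
  simp only [mem_filter, mem_range, mem_Ico, Nat.ceil_le, ← Nat.lt_ceil]
  exact ⟨fun h => h.2, fun h => ⟨h.2.trans_le hy, h⟩⟩

theorem natCast_card_filter_range_mem_Ico {R : Type*} [Ring R] [LinearOrder R] [FloorRing R]
    {x y : R} {n : ℕ} (hx : 0 ≤ x) (hxy : x ≤ y) (hy : ⌈y⌉₊ ≤ n) :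
    (#((range n).filter (fun j : ℕ => x ≤ j ∧ (j : R) < y)) : ℤ) = ⌈y⌉ - ⌈x⌉ := by
  rw [filter_range_mem_Ico_eq_Ico hy, Nat.card_Ico, Nat.cast_sub (Nat.ceil_mono hxy),
    Int.natCast_ceil_eq_ceil hx, Int.natCast_ceil_eq_ceil (hx.trans hxy)]

theorem natCast_card_filter_range_fract_div_lt {K : Type*} [Field K] [LinearOrder K]
    [IsStrictOrderedRing K] [FloorRing K] {α β : K} (hα : 0 < α) (hβ₀ : 0 ≤ β) (hβ₁ : β ≤ 1)
    (s : ℤ) {n : ℕ} (hn : (n : K) = (s + β) * α) :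
    (#((range n).filter fun j : ℕ => Int.fract ((j : K) / α) < β) : ℤ) =
      ∑ m ∈ Icc 0 s, (⌈(m + β) * α⌉ - ⌈m * α⌉) := by
  have hmaps : ∀ j ∈ (range n).filter (fun j : ℕ => Int.fract ((j : K) / α) < β),
      ⌊(j : K) / α⌋ ∈ Icc 0 s := by
    intro j hj
    have hjn : (j : K) < (s + β) * α := hn ▸ Nat.cast_lt.mpr (mem_range.mp (mem_filter.mp hj).1)
    have hjs : (j : K) / α < s + 1 := by rw [div_lt_iff₀ hα]; nlinarith
    exact mem_Icc.mpr ⟨Int.floor_nonneg.mpr (by positivity), Int.lt_add_one_iff.mp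
      (Int.floor_lt.mpr (by exact_mod_cast hjs))⟩
  rw [card_eq_sum_card_fiberwise hmaps, Nat.cast_sum]
  refine sum_congr rfl fun m hm => ?_
  obtain ⟨hm₀, hms⟩ := mem_Icc.mp hm
  have hfiber : ((range n).filter fun j : ℕ => Int.fract ((j : K) / α) < β).filter
      (fun j : ℕ => ⌊(j : K) / α⌋ = m) =
      (range n).filter (fun j : ℕ => m * α ≤ j ∧ (j : K) < (m + β) * α) := by
    rw [filter_filter]
    refine filter_congr fun j _ => ?_
    rw [fract_lt_and_floor_eq_iff hβ₁, le_div_iff₀ hα, div_lt_iff₀ hα]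
  have hmα : (0 : K) ≤ m * α := mul_nonneg (by exact_mod_cast hm₀) hα.le
  have hupper : (m + β) * α ≤ n := by rw [hn]; gcongr
  rw [hfiber, natCast_card_filter_range_mem_Ico hmα (by nlinarith) (Nat.ceil_le.mpr hupper)]

theorem card_filter_range_eq_card_filter_Icc_add_one {p : ℕ → Prop} [DecidablePred p] {n : ℕ}
    (hn : n ≠ 0) (h0 : p 0) : #((range n).filter p) = #((Icc 1 (n - 1)).filter p) + 1 := by
  have hrange : range n = insert 0 (Icc 1 (n - 1)) := by
    ext j
    simp only [mem_range, mem_insert, mem_Icc]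
    omega
  rw [hrange, filter_insert, if_pos h0, card_insert_of_notMem (by simp)]

theorem sum_Icc_int_reflect {M : Type*} [AddCommMonoid M] (f : ℤ → M) (a b : ℤ) :
    ∑ m ∈ Icc a b, f (a + b - m) = ∑ m ∈ Icc a b, f m :=
  sum_nbij' (fun m => a + b - m) (fun m => a + b - m)
    (fun m hm => by simp only [mem_Icc] at hm ⊢; omega)
    (fun m hm => by simp only [mem_Icc] at hm ⊢; omega)
    (fun m _ => by ring) (fun m _ => by ring) (fun m _ => rfl)

theorem ceil_add_mul_sub_ceil_mul {K : Type*} [Field K] [LinearOrder K] [IsStrictOrderedRing K]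
    [FloorRing K] {α β : K} {s r : ℤ} (hα : α = s + β) (hr : α ^ 2 = r) (m : ℤ) :
    ⌈(m + β) * α⌉ - ⌈m * α⌉ = r - s ^ 2 - ⌊(s - m) * β⌋ - ⌈m * β⌉ := by
  have hupper : (m + β) * α = ((r - (s - m) * s : ℤ) : K) + -((s - m) * β) := by
    push_cast; rw [← hr, hα]; ring
  have hlower : m * α = ((m * s : ℤ) : K) + m * β := by push_cast; rw [hα]; ring
  rw [hupper, hlower, Int.ceil_intCast_add, Int.ceil_intCast_add, Int.ceil_neg]
  ring

theorem sum_Icc_floor_sub_mul {K : Type*} [CommRing K] [LinearOrder K] [FloorRing K] (β : K)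
    {s : ℤ} (hs : 0 ≤ s) :
    ∑ m ∈ Icc 0 s, ⌊((s : K) - m) * β⌋ = ∑ k ∈ Icc 1 s, ⌊(k : K) * β⌋ := by
  rw [← sum_Icc_int_reflect _ 0 s, ← insert_Icc_add_one_left_eq_Icc hs, sum_insert (by simp)]
  simp

theorem Irrational.sum_Icc_ceil_mul {β : ℝ} (hβ : Irrational β) {s : ℤ} (hs : 0 ≤ s) :
    ∑ m ∈ Icc 0 s, ⌈(m : ℝ) * β⌉ = ∑ k ∈ Icc 1 s, ⌊(k : ℝ) * β⌋ + s := by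
  have hceil : ∀ k ∈ Icc 1 s, ⌈(k : ℝ) * β⌉ = ⌊(k : ℝ) * β⌋ + 1 := fun k hk =>
    (Int.ceil_eq_floor_add_one_iff_notMem _).mpr fun ⟨z, hz⟩ =>
      (hβ.intCast_mul (by grind)).ne_int z hz.symm
  rw [← insert_Icc_add_one_left_eq_Icc hs, sum_insert (by simp), zero_add, sum_congr rfl hceil,
    sum_add_distrib, sum_const, Int.card_Icc]
  simp [hs]

theorem stmt6_general (r : ℕ) (hns : ¬ IsSquare r)
    (s t : ℤ) (hs : s = ⌊Real.sqrt r⌋)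
    (β : ℝ) (hβ : β = Real.sqrt r - s)
    (hrt : (r : ℤ) = s ^ 2 + t)
    (N : ℕ)
    (hN : N = ((Finset.Icc 1 (r - 1)).filter
      (fun j : ℕ => Int.fract ((j : ℝ) / Real.sqrt r) < β)).card) :
    (N : ℤ) = (s + 1) * (t - 1) - 2 * ∑ k ∈ Finset.Icc 1 s, ⌊(k : ℝ) * β⌋ := by
  have hr₀ : r ≠ 0 := by rintro rfl; exact hns ⟨0, rfl⟩
  have hα₀ : 0 < √(r : ℝ) := Real.sqrt_pos.mpr (by positivity)
  have hαsq : √(r : ℝ) ^ 2 = ((r : ℤ) : ℝ) := by simp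
  have hαs : √(r : ℝ) = s + β := by rw [hβ]; ring
  have hβfract : β = Int.fract √(r : ℝ) := by rw [hβ, hs, Int.self_sub_floor]
  have hβirr : Irrational β := hβ ▸ (irrational_sqrt_natCast_iff.mpr hns).sub_intCast s
  have hβ₀ : 0 < β := (hβfract ▸ Int.fract_nonneg _).lt_of_ne' hβirr.ne_zero
  have hs₀ : 0 ≤ s := hs ▸ Int.floor_nonneg.mpr (Real.sqrt_nonneg _)
  have hcount := natCast_card_filter_range_fract_div_lt hα₀ hβ₀.le
    (hβfract ▸ (Int.fract_lt_one _).le) s (n := r) (by rw [← hαs, ← sq, hαsq, Int.cast_natCast])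
  rw [card_filter_range_eq_card_filter_Icc_add_one hr₀ (by simpa using hβ₀), ← hN,
    sum_congr rfl fun m _ => ceil_add_mul_sub_ceil_mul hαs hαsq m, sum_sub_distrib,
    sum_sub_distrib, sum_Icc_floor_sub_mul β hs₀, hβirr.sum_Icc_ceil_mul hs₀, sum_const,
    Int.card_Icc, sub_zero, nsmul_eq_mul, Int.toNat_of_nonneg (by omega), Nat.cast_succ]
    at hcount
  linear_combination hcount + (s + 1) * hrt

theorem stmt6 (r : ℕ) (hr : 2 ≤ r) (hns : ¬ IsSquare r)
    (s t : ℤ) (hs : s = ⌊Real.sqrt r⌋)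
    (β : ℝ) (hβ : β = Real.sqrt r - s)
    (hrt : (r : ℤ) = s ^ 2 + t) (ht1 : 1 ≤ t) (ht2 : t ≤ 2 * s)
    (N : ℕ)
    (hN : N = ((Finset.Icc 1 (r - 1)).filter
      (fun j : ℕ => Int.fract ((j : ℝ) / Real.sqrt r) < β)).card) :
    (N : ℤ) = (s + 1) * (t - 1) - 2 * ∑ k ∈ Finset.Icc 1 s, ⌊(k : ℝ) * β⌋ :=
  stmt6_general r hns s t hs β hβ hrt N hN
end

section
/- Let r ≥ 2 be a non-square integer, α = √r, s = ⌊α⌋, β = α - s, and N(r) = #{1 ≤ j ≤ r-1 : {j/α} < β}. Then N(r) < rβ + s - 1. -/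
open Real Finset

/-!
Write s = ⌊√r⌋, t = r - s² ∈ [1, 2s] and n = 2s + 1. Group the j by m = ⌊j/√r⌋ ∈ [0, s]:
{j/√r} < β means j < r - (s - m)√r, and j > m√r by irrationality, so
N + 2 ∑_{m ≤ s} ⌊m√r⌋ + s + 1 ≤ (s + 1) r.
Since r n² - (sn + t)² = t(n - t) > 0, we have √r > s + t/n, hence ⌊m√r⌋ ≥ ms + ⌊mt/n⌋.
The residues mt mod n, 1 ≤ m ≤ s, sum to at most sn - s(s+1)/2, because at most v of them
are ≥ n - v. Together: nN ≤ rt + n(s - 1) - (s - t)(s - t + 1), and t < nβ finishes.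
-/

theorem card_mul_card_add_one_le_two_mul_sum {ι : Type*} [DecidableEq ι] (A : Finset ι)
    (u : ι → ℕ) (hu : ∀ v, #{a ∈ A | u a ≤ v} ≤ v) :
    #A * (#A + 1) ≤ 2 * ∑ a ∈ A, u a := by
  induction A using Finset.induction_on_max_value u with
  | empty => simp
  | insert a A ha hmax ih =>
    have hA : ∀ v, #{x ∈ A | u x ≤ v} ≤ v := fun v =>
      (card_le_card (filter_subset_filter _ (subset_insert a A))).trans (hu v)
    have hua : #(insert a A) ≤ u a := by
      simpa [filter_true_of_mem (s := insert a A) (p := fun x => u x ≤ u a)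
        (by simpa using hmax)] using hu (u a)
    rw [card_insert_of_notMem ha] at hua ⊢
    rw [sum_insert ha]
    linarith [ih hA]

theorem card_filter_sub_le_mul_mod_le {n : ℕ} (hn : 0 < n) (t v : ℕ) :
    #{m ∈ range n | n - v ≤ m * t % n} ≤ v := by
  set d := n.gcd t
  set n' := n / d
  have hd : 0 < d := Nat.gcd_pos_of_pos_left t hn
  have hdn : d ∣ n := Nat.gcd_dvd_left n t
  have hnd : n' * d = n := Nat.div_mul_cancel hdn
  have hn' : 0 < n' := Nat.div_pos (Nat.le_of_dvd hn hdn) hd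
  have hdvd (m : ℕ) : d ∣ m * t % n :=
    (Nat.dvd_mod_iff hdn).2 (dvd_mul_of_dvd_right (Nat.gcd_dvd_right n t) m)
  -- `m < n` is determined by `m * t % n`, a multiple of `d`, together with `m / n'`.
  calc #{m ∈ range n | n - v ≤ m * t % n}
      ≤ #(Ico (n' - v / d) n' ×ˢ range d) := by
        refine card_le_card_of_injOn (fun m => (m * t % n / d, m / n')) ?_ ?_
        · intro m hm
          simp only [coe_filter, mem_range, Set.mem_ofPred_eq] at hm
          obtain ⟨w, hw⟩ := hdvd m
          have hlt : m * t % n < n := Nat.mod_lt _ hn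
          simp only [coe_product, coe_Ico, coe_range, Set.mem_prod, Set.mem_Ico, Set.mem_Iio]
          rw [hw, Nat.mul_div_cancel_left _ hd]
          refine ⟨⟨?_, ?_⟩, ?_⟩
          · have : n' - w ≤ v / d := (Nat.le_div_iff_mul_le hd).2 <| by
              rw [Nat.sub_mul, hnd, mul_comm w, ← hw]
              omega
            omega
          · nlinarith
          · rw [Nat.div_lt_iff_lt_mul hn']
            linarith [hm.1]
        · intro m₁ _ m₂ _ h
          simp only [Prod.mk.injEq] at h
          have hmod : m₁ * t ≡ m₂ * t [MOD n] := (Nat.div_left_inj (hdvd m₁) (hdvd m₂)).1 h.1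
          rw [← Nat.div_add_mod m₁ n', ← Nat.div_add_mod m₂ n', h.2,
            Nat.ModEq.cancel_right_div_gcd hn hmod]
    _ ≤ v / d * d := by
        rw [card_product, Nat.card_Ico, card_range]
        exact Nat.mul_le_mul_right _ tsub_tsub_le
    _ ≤ v := Nat.div_mul_le_self v d

theorem two_mul_sum_mul_mod_add_le {s n : ℕ} (hsn : s < n) (t : ℕ) :
    2 * ∑ m ∈ range (s + 1), m * t % n + s * (s + 1) ≤ 2 * s * n := by
  have hsmall (v : ℕ) : #{m ∈ Icc 1 s | n - m * t % n ≤ v} ≤ v := by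
    refine (card_le_card fun m hm => ?_).trans
      (card_filter_sub_le_mul_mod_le (Nat.zero_lt_of_lt hsn) t v)
    simp only [mem_filter, mem_Icc, mem_range] at hm ⊢
    omega
  have hgap := card_mul_card_add_one_le_two_mul_sum _ _ hsmall
  rw [Nat.card_Icc, Nat.add_sub_cancel] at hgap
  have hcompl : ∑ m ∈ Icc 1 s, (n - m * t % n) + ∑ m ∈ Icc 1 s, m * t % n = s * n := by
    rw [← sum_add_distrib,
      sum_congr rfl fun m _ => Nat.sub_add_cancel (Nat.mod_lt _ (by omega)).le]
    simp
  have hzero : ∑ m ∈ Icc 1 s, m * t % n = ∑ m ∈ range (s + 1), m * t % n :=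
    sum_subset (fun m hm => by simp only [mem_Icc, mem_range] at hm ⊢; omega) fun m hm hm' => by
      obtain rfl : m = 0 := by simp only [mem_Icc, mem_range] at hm hm' ⊢; omega
      simp
  rw [← hzero]
  linarith

theorem add_div_two_mul_add_one_lt_sqrt {s t : ℝ} (hs : 0 ≤ s) (ht : 0 < t)
    (hts : t < 2 * s + 1) : s + t / (2 * s + 1) < √(s ^ 2 + t) := by
  have hn : 0 < 2 * s + 1 := by linarith
  rw [lt_sqrt (by positivity), ← sub_pos]
  have key : s ^ 2 + t - (s + t / (2 * s + 1)) ^ 2 = t * (2 * s + 1 - t) / (2 * s + 1) ^ 2 := by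
    field_simp
    ring
  rw [key]
  have : 0 < 2 * s + 1 - t := by linarith
  positivity

theorem mul_add_mul_div_le_floor_mul {s t n : ℕ} {α : ℝ} (h : s + t / n ≤ α) (m : ℕ) :
    m * s + m * t / n ≤ ⌊m * α⌋₊ := by
  apply Nat.le_floor
  push_cast
  calc (m : ℝ) * s + ((m * t / n : ℕ) : ℝ) ≤ m * s + m * t / n := by
        gcongr; exact_mod_cast Nat.cast_div_le
    _ = m * (s + t / n) := by ring
    _ ≤ m * α := by gcongr

theorem mul_add_one_le_two_mul_sum_floor_mul {s t n : ℕ} (hsn : s < n) {α : ℝ}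
    (h : s + t / n ≤ α) :
    (n * s + t + 1) * (s * (s + 1)) ≤ 2 * n * ∑ m ∈ range (s + 1), ⌊m * α⌋₊ + 2 * s * n := by
  have hterm (m : ℕ) : n * m * s + m * t ≤ n * ⌊m * α⌋₊ + m * t % n := by
    have := Nat.mul_le_mul_left n (mul_add_mul_div_le_floor_mul h m)
    have := Nat.div_add_mod (m * t) n
    nlinarith
  have hsum := sum_le_sum fun m (_ : m ∈ range (s + 1)) => hterm m
  rw [sum_add_distrib, sum_add_distrib, ← mul_sum, ← sum_mul, ← sum_mul, ← mul_sum] at hsum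
  have hgauss := sum_range_id_mul_two (s + 1)
  have hmod := two_mul_sum_mul_mod_add_le hsn t
  rw [Nat.add_sub_cancel] at hgauss
  have hG : (∑ i ∈ range (s + 1), i) * 2 * (n * s + t) = (s + 1) * s * (n * s + t) := by
    rw [hgauss]
  linarith

theorem floor_mul_floor_div_lt {α : ℝ} (hα : Irrational α) (hα0 : 0 < α) {j : ℕ} (hj : 0 < j) :
    ⌊⌊j / α⌋₊ * α⌋₊ < j := by
  have hlt : (⌊j / α⌋₊ : ℝ) < j / α :=
    (Nat.floor_le (by positivity)).lt_of_ne ((hα.natCast_div hj.ne').ne_nat _).symm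
  rw [Nat.floor_lt (by positivity), ← lt_div_iff₀ hα0]
  exact hlt

noncomputable def lowFractSet (r : ℕ) : Finset ℕ :=
  {j ∈ Icc 1 (r - 1) | Int.fract ((j : ℝ) / √r) < √r - r.sqrt}

section

variable {r : ℕ}

theorem floor_div_sqrt_le_sqrt {j : ℕ} (hj : j < r) : ⌊j / √r⌋₊ ≤ r.sqrt := by
  rw [← Real.nat_floor_real_sqrt_eq_nat_sqrt]
  refine Nat.floor_le_floor ?_
  have hr : (0 : ℝ) < r := by exact_mod_cast Nat.zero_lt_of_lt hj
  rw [div_le_iff₀ (sqrt_pos.2 hr), mul_self_sqrt hr.le]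
  exact_mod_cast hj.le

theorem add_floor_sub_mul_sqrt_lt (hr : 0 < r) {j s : ℕ} (hs : ⌊j / √r⌋₊ ≤ s)
    (hj : Int.fract (j / √r) < √r - s) : j + ⌊((s - ⌊j / √r⌋₊ : ℕ) : ℝ) * √r⌋₊ < r := by
  have hα : 0 < √(r : ℝ) := by positivity
  have hfract : Int.fract (j / √r) = j / √r - ⌊j / √r⌋₊ := by
    rw [Int.fract, ← Int.natCast_floor_eq_floor (by positivity), Int.cast_natCast]
  rw [hfract, div_sub' hα.ne', div_lt_iff₀ hα] at hj
  have hsq : √(r : ℝ) * √r = r := mul_self_sqrt (by positivity)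
  have hfloor := Nat.floor_le (a := ((s - ⌊j / √r⌋₊ : ℕ) : ℝ) * √r) (by positivity)
  have : ((j + ⌊((s - ⌊j / √r⌋₊ : ℕ) : ℝ) * √r⌋₊ : ℕ) : ℝ) < r := by
    push_cast [hs] at hfloor ⊢
    nlinarith
  exact_mod_cast this

theorem card_fiber_add_floor_mul_add_floor_mul_lt (hr : ¬ IsSquare r) {m : ℕ}
    (hm : m ≤ r.sqrt) :
    #((lowFractSet r).filter fun j : ℕ => ⌊(j : ℝ) / √r⌋₊ = m) +
      ⌊m * √r⌋₊ + ⌊((r.sqrt - m : ℕ) : ℝ) * √r⌋₊ < r := by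
  have hα : Irrational √r := irrational_sqrt_natCast_iff.2 hr
  have hr0 : 0 < r := Nat.pos_of_ne_zero (by rintro rfl; exact hr ⟨0, rfl⟩)
  have hα0 : (0 : ℝ) < √r := sqrt_pos.2 (by exact_mod_cast hr0)
  have hfloors : ⌊m * √r⌋₊ + ⌊((r.sqrt - m : ℕ) : ℝ) * √r⌋₊ < r := by
    have hs : (r.sqrt : ℝ) < √r :=
      (Real.nat_sqrt_le_real_sqrt).lt_of_ne (hα.ne_nat _).symm
    have h₁ := Nat.floor_le (a := m * √r) (by positivity)
    have h₂ := Nat.floor_le (a := ((r.sqrt - m : ℕ) : ℝ) * √r) (by positivity)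
    have : ((⌊m * √r⌋₊ + ⌊((r.sqrt - m : ℕ) : ℝ) * √r⌋₊ : ℕ) : ℝ) < r := by
      push_cast [hm] at h₂ ⊢
      nlinarith [mul_self_sqrt (Nat.cast_nonneg (α := ℝ) r)]
    exact_mod_cast this
  have hsub : (lowFractSet r).filter (fun j : ℕ => ⌊(j : ℝ) / √r⌋₊ = m) ⊆
      Ioo ⌊m * √r⌋₊ (r - ⌊((r.sqrt - m : ℕ) : ℝ) * √r⌋₊) := by
    intro j hj
    simp only [lowFractSet, mem_filter, mem_Icc] at hj
    obtain ⟨⟨⟨hj1, hjr⟩, hfract⟩, rfl⟩ := hj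
    have hlow := floor_mul_floor_div_lt hα hα0 hj1
    have hhigh := add_floor_sub_mul_sqrt_lt hr0 (floor_div_sqrt_le_sqrt (by omega)) hfract
    rw [mem_Ioo]
    omega
  have hcard := card_le_card hsub
  rw [Nat.card_Ioo] at hcard
  omega

theorem card_lowFractSet_add_two_mul_sum_floor_le (hr : ¬ IsSquare r) :
    #(lowFractSet r) + 2 * ∑ m ∈ range (r.sqrt + 1), ⌊m * √r⌋₊ + (r.sqrt + 1) ≤
      (r.sqrt + 1) * r := by
  have hmaps : ∀ j ∈ lowFractSet r, ⌊(j : ℝ) / √r⌋₊ ∈ range (r.sqrt + 1) := by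
    intro j hj
    simp only [lowFractSet, mem_filter, mem_Icc] at hj
    exact mem_range_succ_iff.2 (floor_div_sqrt_le_sqrt (by omega))
  have hreflect : ∑ m ∈ range (r.sqrt + 1), ⌊((r.sqrt - m : ℕ) : ℝ) * √r⌋₊ =
      ∑ m ∈ range (r.sqrt + 1), ⌊m * √r⌋₊ := by
    simpa using sum_range_reflect (fun m : ℕ => ⌊m * √r⌋₊) (r.sqrt + 1)
  have hfibers : ∑ m ∈ range (r.sqrt + 1),
      (#((lowFractSet r).filter fun j : ℕ => ⌊(j : ℝ) / √r⌋₊ = m) + ⌊m * √r⌋₊ +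
        ⌊((r.sqrt - m : ℕ) : ℝ) * √r⌋₊ + 1) ≤ ∑ m ∈ range (r.sqrt + 1), r :=
    sum_le_sum fun m hm => Nat.add_one_le_of_lt <|
      card_fiber_add_floor_mul_add_floor_mul_lt hr (Nat.le_of_lt_add_one (mem_range.1 hm))
  simp only [sum_add_distrib, sum_const, card_range, smul_eq_mul, hreflect,
    ← card_eq_sum_card_fiberwise hmaps] at hfibers
  linarith

theorem two_mul_sqrt_add_one_mul_card_lowFractSet_le (hr : ¬ IsSquare r) {t : ℕ}
    (hrt : r = r.sqrt ^ 2 + t)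
    (hα : (r.sqrt : ℝ) + t / (2 * r.sqrt + 1) ≤ √r) :
    ((2 * r.sqrt + 1) * #(lowFractSet r) : ℤ) ≤ r * t + (2 * r.sqrt + 1) * (r.sqrt - 1) := by
  have hcount := Nat.mul_le_mul_left (2 * r.sqrt + 1) (card_lowFractSet_add_two_mul_sum_floor_le hr)
  have hfloor := mul_add_one_le_two_mul_sum_floor_mul (s := r.sqrt) (n := 2 * r.sqrt + 1)
    (t := t) (by omega) (α := √r) (by push_cast; exact hα)
  have hconsec : (0 : ℤ) ≤ (r.sqrt - t) * (r.sqrt - t + 1) := by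
    rcases le_or_gt (t : ℤ) r.sqrt with h | h <;> nlinarith
  zify at hcount hfloor hrt
  rw [hrt] at hcount ⊢
  nlinarith

end

theorem exists_eq_sqrt_sq_add_of_not_isSquare {r : ℕ} (hr : ¬ IsSquare r) :
    ∃ t, r = r.sqrt ^ 2 + t ∧ 0 < t ∧ t < 2 * r.sqrt + 1 := by
  obtain ⟨t, hrt⟩ := Nat.exists_eq_add_of_le (Nat.sqrt_le' r)
  refine ⟨t, hrt, Nat.pos_of_ne_zero fun h => hr ⟨r.sqrt, by simpa [h, sq] using hrt⟩, ?_⟩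
  have : r < (r.sqrt + 1) ^ 2 := Nat.lt_succ_sqrt' r
  nlinarith

theorem stmt7_general (r : ℕ) (hns : ¬ IsSquare r)
    (s : ℤ) (hs : s = ⌊Real.sqrt r⌋)
    (β : ℝ) (hβ : β = Real.sqrt r - s)
    (N : ℕ)
    (hN : N = ((Finset.Icc 1 (r - 1)).filter
      (fun j : ℕ => Int.fract ((j : ℝ) / Real.sqrt r) < β)).card) :
    (N : ℝ) < r * β + s - 1 := by
  rw [floor_real_sqrt_eq_nat_sqrt] at hs
  subst hs hβ
  replace hN : N = #(lowFractSet r) := by simpa [lowFractSet] using hN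
  subst hN
  obtain ⟨t, hrt, ht0, htk⟩ := exists_eq_sqrt_sq_add_of_not_isSquare hns
  set k := r.sqrt
  have hα : (k : ℝ) + t / (2 * k + 1) < √r := by
    rw [hrt]; push_cast
    exact add_div_two_mul_add_one_lt_sqrt (by positivity) (by exact_mod_cast ht0)
      (by exact_mod_cast htk)
  have hkey := two_mul_sqrt_add_one_mul_card_lowFractSet_le hns hrt hα.le
  have ht : (t : ℝ) < (2 * k + 1) * (√r - k) := (div_lt_iff₀' (by positivity)).1 (by linarith)
  have hkeyR : ((2 * k + 1) * #(lowFractSet r) : ℝ) ≤ r * t + (2 * k + 1) * (k - 1) := by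
    exact_mod_cast hkey
  have hr0 : (0 : ℝ) < r := by exact_mod_cast (show 0 < r by omega)
  refine lt_of_mul_lt_mul_left (a := (2 * k + 1 : ℝ)) ?_ (by positivity)
  push_cast
  nlinarith [mul_lt_mul_of_pos_left ht hr0]

theorem stmt7 (r : ℕ) (hr : 2 ≤ r) (hns : ¬ IsSquare r)
    (s : ℤ) (hs : s = ⌊Real.sqrt r⌋)
    (β : ℝ) (hβ : β = Real.sqrt r - s)
    (N : ℕ)
    (hN : N = ((Finset.Icc 1 (r - 1)).filter
      (fun j : ℕ => Int.fract ((j : ℝ) / Real.sqrt r) < β)).card) :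
    (N : ℝ) < r * β + s - 1 :=
  stmt7_general r hns s hs β hβ N hN
end

section
/- Let r = s² be a perfect square with s odd, and a(n) = ⌊n/s + s/2⌋. Then for all n ≥ s², S(n) := ∑_{j=0}^{s²-1} a(n-j) = sn - s(s-1)/2, and a(S(n)) = n. -/
/-!
Write `s = 2t + 1`. Clearing denominators gives `a m = ⌊(m + 2t(t+1)) / s⌋`, so `S n` is a sum of
`⌊(c - j) / s⌋` over `s²` consecutive `j`. Cut into `s` blocks of `s` consecutive terms, each block
is evaluated by Hermite's identity `∑_{i<s} ⌊(c + i) / s⌋ = c`, and the blocks form an arithmetic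
progression; this gives `S n = s n - s t`. Then `a (S n) = ⌊(s n + t) / s⌋ = n` because `0 ≤ t < s`.
-/

open Finset

theorem Int.sum_range_add_ediv {m : ℕ} (hm : 0 < m) (c : ℤ) :
    ∑ i ∈ Finset.range m, (c + i) / m = c := by
  have hstep (c : ℤ) :
      ∑ i ∈ Finset.range m, (c + 1 + i) / m = ∑ i ∈ Finset.range m, (c + i) / m + 1 := by
    have h := sum_range_succ' (fun i => (c + i) / (m : ℤ)) m
    rw [sum_range_succ] at h
    have hm' : (c + m) / (m : ℤ) = c / m + 1 := by
      simpa using Int.add_mul_ediv_right c 1 (by omega : (m : ℤ) ≠ 0)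
    simp only [Nat.cast_add, Nat.cast_one, Nat.cast_zero, add_zero, hm'] at h
    simp only [add_right_comm c 1, ← add_assoc] at h ⊢
    omega
  induction c using Int.induction_on with
  | zero =>
    simp only [zero_add]
    exact sum_eq_zero fun i hi => Int.ediv_eq_zero_of_lt (by omega) (by have := mem_range.1 hi; omega)
  | succ k ih => rw [hstep, ih]
  | pred k ih => have := hstep (-k - 1); rw [sub_add_cancel] at this; omega

theorem Int.sum_range_sub_ediv {m : ℕ} (hm : 0 < m) (c : ℤ) :
    ∑ i ∈ Finset.range m, (c - i) / m = c - m + 1 := by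
  rw [← sum_range_reflect, ← Int.sum_range_add_ediv hm (c - m + 1)]
  refine sum_congr rfl fun i hi => ?_
  rw [mem_range] at hi
  congr 1
  omega

theorem Int.sum_range_mul_sub_ediv {m : ℕ} (hm : 0 < m) (k : ℕ) (c : ℤ) :
    ∑ j ∈ Finset.range (m * k), (c - j) / m = ∑ l ∈ Finset.range k, (c - m * l - m + 1) := by
  induction k with
  | zero => simp
  | succ k ih =>
    rw [mul_add_one, sum_range_add, ih, sum_range_succ, ← Int.sum_range_sub_ediv hm]
    congr 1
    refine sum_congr rfl fun i _ => ?_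
    push_cast
    ring_nf

theorem Int.floor_div_add_half {K : Type*} [Field K] [LinearOrder K] [IsOrderedRing K]
    [FloorRing K] (s : ℕ) (n : ℤ) :
    ⌊(n : K) / s + s / 2⌋ = (n + (s : ℤ) ^ 2 / 2) / s := by
  have hx : (n : K) / s + s / 2 = (((2 * n + s ^ 2 : ℤ) : K) / (2 : ℕ)) / s := by
    rcases eq_or_ne s 0 with rfl | hs
    · simp
    · push_cast
      field_simp
  rw [hx, Int.floor_div_natCast, Int.floor_div_natCast, Int.floor_intCast]
  congr 1
  omega

theorem Int.two_mul_sum_range_sq_sub_ediv {m : ℕ} (hm : 0 < m) (c : ℤ) :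
    2 * ∑ j ∈ Finset.range (m ^ 2), (c - j) / m = 2 * m * c - m * (m - 1) * (m + 2) := by
  have hgauss (k : ℕ) : 2 * ∑ l ∈ Finset.range k, (c - m * l - m + 1) =
      k * (2 * c - 2 * m + 2) - m * k * (k - 1) := by
    induction k with
    | zero => simp
    | succ k ih => rw [sum_range_succ, mul_add, ih]; push_cast; ring
  rw [sq, Int.sum_range_mul_sub_ediv hm, hgauss]
  ring

theorem stmt8 (s : ℤ) (hs1 : 1 ≤ s) (hodd : Odd s)
    (a : ℤ → ℤ)
    (ha : ∀ n : ℤ, a n = ⌊(n : ℝ) / s + (s : ℝ) / 2⌋)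
    (S : ℤ → ℤ)
    (hS : ∀ n : ℤ, S n = ∑ j ∈ Finset.range (s ^ 2).toNat, a (n - j)) :
    ∀ n : ℤ, s ^ 2 ≤ n →
      S n = s * n - s * (s - 1) / 2 ∧ a (S n) = n := by
  intro n _
  lift s to ℕ using (by omega)
  obtain ⟨t, ht⟩ := hodd
  have ha' (m : ℤ) : a m = (m + s ^ 2 / 2) / s := by
    rw [ha, Int.cast_natCast, Int.floor_div_add_half]
  have hhalf : (s : ℤ) ^ 2 / 2 = 2 * t * (t + 1) := by
    rw [ht, show (2 * t + 1) ^ 2 = 1 + 2 * (2 * t * (t + 1)) by ring,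
      Int.add_mul_ediv_left _ _ two_ne_zero]
    norm_num
  have hSn : S n = s * n - s * t := by
    have hsum : S n = ∑ j ∈ Finset.range (s ^ 2), (n + s ^ 2 / 2 - j) / s := by
      rw [hS, ← Nat.cast_pow, Int.toNat_natCast, Nat.cast_pow]
      exact sum_congr rfl fun j _ => by rw [ha', add_sub_right_comm]
    have h2 := Int.two_mul_sum_range_sq_sub_ediv (by omega : 0 < s) (n + s ^ 2 / 2)
    rw [← hsum] at h2
    apply mul_left_cancel₀ (two_ne_zero : (2 : ℤ) ≠ 0)
    rw [h2, hhalf, ht]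
    ring
  refine ⟨?_, ?_⟩
  · rw [hSn, ht, show (2 * t + 1) * (2 * t + 1 - 1) = (2 * t + 1) * t * 2 by ring,
      Int.mul_ediv_cancel _ two_ne_zero]
  · rw [ha', hSn, hhalf, ht,
      show (2 * t + 1) * n - (2 * t + 1) * t + 2 * t * (t + 1) = t + n * (2 * t + 1) by ring,
      Int.add_mul_ediv_right _ _ (by omega), Int.ediv_eq_zero_of_lt (by omega) (by omega), zero_add]
end

section
/- Let r ≥ 2 be a non-square integer, α = √r, and define Φ : ℤ → ℝ by Φ(n) = ∑_{j=0}^{r-1} {(n-j)/α + α/2}. Then sup_{n} Φ(n) + inf_{n} Φ(n) = r, where sup and inf are taken over the closure of the values (equivalently, over the orbit parameter θ ∈ [0,1)). -/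
open Real Finset

/-! With `G_a θ = ∑ i ∈ s, {θ - a i}`, the identity `{t} + {-t} = 1` for `t ∉ ℤ` gives
`G_a θ + G_{-a} (-θ) = #s` away from the finitely many jumps (mod 1) of `G_a`. Since `G_a` is
right-continuous, each of its values is a limit of such generic values, so
`sup G_a + inf G_{-a} = #s`. For an arithmetic progression `a j = j c`, `j < r`, the palindrome
`j ↦ r - 1 - j` makes `G_{-a}` a translate of `G_a`, so the two have the same range. -/

open Filter Topology Set

theorem Int.fract_sub_eventuallyEq_nhdsGE (x c : ℝ) :
    (fun y => Int.fract (y - c)) =ᶠ[𝓝[≥] x] fun y => y - c - ⌊x - c⌋ := by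
  have hx : x < ⌊x - c⌋ + 1 + c := by linarith [Int.lt_floor_add_one (x - c)]
  filter_upwards [Ico_mem_nhdsGE hx] with y hy
  rw [Int.fract, Int.floor_eq_iff.2 ⟨by linarith [Int.floor_le (x - c), hy.1], by linarith [hy.2]⟩]

theorem Int.tendsto_fract_sub_nhdsGE (x c : ℝ) :
    Tendsto (fun y => Int.fract (y - c)) (𝓝[≥] x) (𝓝 (Int.fract (x - c))) := by
  refine Tendsto.congr' (Int.fract_sub_eventuallyEq_nhdsGE x c).symm ?_
  exact ((by fun_prop : Continuous fun y : ℝ => y - c - ⌊x - c⌋).tendsto' x _ rfl).mono_left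
    nhdsWithin_le_nhds

theorem Int.eventually_fract_sub_ne_zero_nhdsGT (x c : ℝ) :
    ∀ᶠ y in 𝓝[>] x, Int.fract (y - c) ≠ 0 := by
  filter_upwards [nhdsWithin_mono x Ioi_subset_Ici_self (Int.fract_sub_eventuallyEq_nhdsGE x c),
    self_mem_nhdsWithin] with y hy hxy
  rw [hy]
  exact (sub_pos.2 ((Int.floor_le (x - c)).trans_lt (sub_lt_sub_right hxy c))).ne'

noncomputable def sawtoothSum {ι : Type*} (s : Finset ι) (a : ι → ℝ) (x : ℝ) : ℝ :=
  ∑ i ∈ s, Int.fract (x - a i)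

section sawtoothSum

variable {ι : Type*} (s : Finset ι) (a : ι → ℝ)

theorem sawtoothSum_periodic : Function.Periodic (sawtoothSum s a) 1 := fun x => by
  simp only [sawtoothSum, add_sub_right_comm x 1, Int.fract_add_one]

theorem sawtoothSum_nonneg (x : ℝ) : 0 ≤ sawtoothSum s a x :=
  sum_nonneg fun _ _ => Int.fract_nonneg _

theorem sawtoothSum_le_card (x : ℝ) : sawtoothSum s a x ≤ #s := by
  simpa [sawtoothSum] using sum_le_sum fun i (_ : i ∈ s) => (Int.fract_lt_one (x - a i)).le

theorem sawtoothSum_add_sawtoothSum_neg {x : ℝ} (hx : ∀ i ∈ s, Int.fract (x - a i) ≠ 0) :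
    sawtoothSum s a x + sawtoothSum s (-a) (-x) = #s := by
  rw [sawtoothSum, sawtoothSum, ← sum_add_distrib, ← nsmul_one, ← sum_const]
  refine sum_congr rfl fun i hi => ?_
  rw [Pi.neg_apply, sub_neg_eq_add, neg_add_eq_sub, ← neg_sub x, Int.fract_neg (hx i hi)]
  ring

theorem tendsto_sawtoothSum_nhdsGE (x : ℝ) :
    Tendsto (sawtoothSum s a) (𝓝[≥] x) (𝓝 (sawtoothSum s a x)) :=
  tendsto_finsetSum s fun i _ => Int.tendsto_fract_sub_nhdsGE x (a i)

theorem sawtoothSum_mem_closure_image (x : ℝ) :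
    sawtoothSum s a x ∈
      closure (sawtoothSum s a '' {y | ∀ i ∈ s, Int.fract (y - a i) ≠ 0}) := by
  refine mem_closure_of_tendsto
    ((tendsto_sawtoothSum_nhdsGE s a x).mono_left (nhdsWithin_mono x Ioi_subset_Ici_self)) ?_
  filter_upwards [(eventually_all_finset s).2 fun i _ =>
    Int.eventually_fract_sub_ne_zero_nhdsGT x (a i)] with y hy
  exact mem_image_of_mem _ hy

theorem sawtoothSum_mem_Icc (x : ℝ) :
    sawtoothSum s a x ∈ Icc (#s - sSup (range (sawtoothSum s (-a))))
      (#s - sInf (range (sawtoothSum s (-a)))) := by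
  refine closure_minimal ?_ isClosed_Icc (sawtoothSum_mem_closure_image s a x)
  rintro _ ⟨y, hy, rfl⟩
  rw [← sawtoothSum_add_sawtoothSum_neg s a hy]
  constructor
  · have := le_csSup ⟨(#s : ℝ), forall_mem_range.2 (sawtoothSum_le_card s (-a))⟩
      (mem_range_self (-y))
    linarith
  · have := csInf_le ⟨0, forall_mem_range.2 (sawtoothSum_nonneg s (-a))⟩ (mem_range_self (-y))
    linarith

theorem sSup_range_sawtoothSum_add_sInf_range_neg :
    sSup (range (sawtoothSum s a)) + sInf (range (sawtoothSum s (-a))) = #s := by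
  have hle : sSup (range (sawtoothSum s a)) ≤ #s - sInf (range (sawtoothSum s (-a))) :=
    csSup_le (range_nonempty _) (forall_mem_range.2 fun x => (sawtoothSum_mem_Icc s a x).2)
  have hge : #s - sSup (range (sawtoothSum s a)) ≤ sInf (range (sawtoothSum s (-a))) :=
    le_csInf (range_nonempty _) (forall_mem_range.2 fun x => by
      simpa only [neg_neg] using (sawtoothSum_mem_Icc s (-a) x).1)
  linarith

end sawtoothSum

theorem sawtoothSum_range_neg_mul (r : ℕ) (c y : ℝ) :
    sawtoothSum (range r) (-fun j : ℕ => j * c) y =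
      sawtoothSum (range r) (fun j : ℕ => j * c) (y + (r - 1) * c) := by
  rw [sawtoothSum, sawtoothSum, ← sum_range_reflect]
  refine sum_congr rfl fun j hj => ?_
  have hj : j + 1 ≤ r := mem_range.1 hj
  rw [Pi.neg_apply, Nat.cast_sub (by omega), Nat.cast_sub (by omega), Nat.cast_one]
  exact congrArg Int.fract (by ring)

theorem sSup_add_sInf_range_sawtoothSum_mul (r : ℕ) (c : ℝ) :
    sSup (range (sawtoothSum (range r) fun j : ℕ => j * c)) +
      sInf (range (sawtoothSum (range r) fun j : ℕ => j * c)) = r := by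
  have hneg : range (sawtoothSum (range r) (-fun j : ℕ => j * c)) =
      range (sawtoothSum (range r) fun j : ℕ => j * c) := by
    ext v
    refine ⟨fun ⟨y, hy⟩ => ⟨y + (r - 1) * c, ?_⟩, fun ⟨y, hy⟩ => ⟨y - (r - 1) * c, ?_⟩⟩
    · rw [← hy, sawtoothSum_range_neg_mul]
    · rw [← hy, sawtoothSum_range_neg_mul, sub_add_cancel]
  simpa [hneg] using sSup_range_sawtoothSum_add_sInf_range_neg (range r) fun j : ℕ => j * c

theorem Function.Periodic.image_Ico_zero_one {f : ℝ → ℝ} (hf : Function.Periodic f 1) :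
    f '' Ico 0 1 = range f := by
  refine (image_subset_range _ _).antisymm (forall_mem_range.2 fun x => ?_)
  obtain ⟨y, hy, hxy⟩ := hf.exists_mem_Ico one_pos x 0
  exact ⟨y, by simpa using hy, hxy.symm⟩

theorem stmt10_general (r : ℕ)
    (Φ : ℤ → ℝ)
    (hΦ : ∀ n : ℤ, Φ n = ∑ j ∈ Finset.range r,
      Int.fract (((n : ℝ) - j) / Real.sqrt r + Real.sqrt r / 2))
    (g : ℝ → ℝ)
    (hg : ∀ θ : ℝ, g θ = ∑ j ∈ Finset.range r,
      Int.fract (θ - (j : ℝ) / Real.sqrt r)) :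
    (∀ n : ℤ, Φ n = g (Int.fract ((n : ℝ) / Real.sqrt r + Real.sqrt r / 2))) ∧
    sSup (g '' Set.Ico (0 : ℝ) 1) + sInf (g '' Set.Ico (0 : ℝ) 1) = r := by
  have hgF : g = sawtoothSum (range r) fun j : ℕ => j * (√r)⁻¹ :=
    funext fun θ => by simp only [hg, sawtoothSum, div_eq_mul_inv]
  subst hgF
  have hper := sawtoothSum_periodic (range r) fun j : ℕ => j * (√r)⁻¹
  refine ⟨fun n => ?_, ?_⟩
  · rw [hΦ, Int.fract, ← mul_one (⌊_⌋ : ℝ), hper.sub_int_mul_eq, sawtoothSum]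
    exact sum_congr rfl fun j _ => congrArg Int.fract (by ring)
  · rw [hper.image_Ico_zero_one]
    exact sSup_add_sInf_range_sawtoothSum_mul r _

theorem stmt10 (r : ℕ) (hr : 2 ≤ r) (hns : ¬ IsSquare r)
    (Φ : ℤ → ℝ)
    (hΦ : ∀ n : ℤ, Φ n = ∑ j ∈ Finset.range r,
      Int.fract (((n : ℝ) - j) / Real.sqrt r + Real.sqrt r / 2))
    (g : ℝ → ℝ)
    (hg : ∀ θ : ℝ, g θ = ∑ j ∈ Finset.range r,
      Int.fract (θ - (j : ℝ) / Real.sqrt r)) :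
    (∀ n : ℤ, Φ n = g (Int.fract ((n : ℝ) / Real.sqrt r + Real.sqrt r / 2))) ∧
    sSup (g '' Set.Ico (0 : ℝ) 1) + sInf (g '' Set.Ico (0 : ℝ) 1) = r :=
  stmt10_general r Φ hΦ g hg
end

section
/- Let c = 1/√2, d ∈ [√2/2, 2(√2-1)], a(n) = ⌊cn + d⌋, and f(n) = a(n) + a(n-1). Then for every n ≥ 2, a(f(n)) ∈ {n, n+1}; moreover if {cn + d} ≥ 1 - c (so that a(n+1) = a(n) + 1), then a(f(n)) = n. -/
/-!
Write `x = c n + d` and `θ = {x}`, so `a(n) = x - θ`. Since `c < 1`, `a(n - 1) = ⌊x - c⌋` equals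
`a(n) - 1` when `θ < c` and `a(n)` otherwise, so `f(n) = 2 a(n) - k` with `k ∈ {0, 1}`. Because
`2c² = 1`, `c f(n) + d = n + g` with the gap `g = (2c + 1) d - 2cθ - ck`, hence
`a(f(n)) = n + ⌊g⌋`. The constraints `c ≤ d ≤ 4c - 2` (that is, `√2/2 ≤ d ≤ 2(√2 - 1)`) confine
`g` to `[0, 2)`, and to `[0, 1)` when `θ ≥ 1 - c`. The only boundary case, `g = 1` with `k = 0`,
forces `θ = c` and `d = 4c - 2`, i.e. `c (n + 3) ∈ ℤ`, which the irrationality of `c` rules out.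
-/

open Real

theorem floor_sub_eq_floor_sub_one_of_fract_lt {x c : ℝ} (hc : c ≤ 1) (h : Int.fract x < c) :
    ⌊x - c⌋ = ⌊x⌋ - 1 := by
  rw [Int.floor_eq_iff]
  push_cast
  rw [← Int.self_sub_fract x]
  constructor <;> linarith [Int.fract_nonneg x]

theorem floor_sub_eq_floor_of_le_fract {x c : ℝ} (hc : 0 ≤ c) (h : c ≤ Int.fract x) :
    ⌊x - c⌋ = ⌊x⌋ := by
  rw [Int.floor_eq_iff, ← Int.self_sub_fract x]
  constructor <;> linarith [Int.fract_lt_one x]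

theorem floor_mul_two_floor_sub_add {c : ℝ} (hc : 2 * c ^ 2 = 1) (d : ℝ) (n k : ℤ) :
    ⌊c * ((2 * ⌊c * n + d⌋ - k : ℤ) : ℝ) + d⌋ =
      n + ⌊(2 * c + 1) * d - 2 * c * Int.fract (c * n + d) - c * k⌋ := by
  rw [add_comm (n : ℤ), ← Int.floor_add_intCast]
  congr 1
  push_cast
  rw [← Int.self_sub_fract (c * n + d)]
  linear_combination (n : ℝ) * hc

theorem fract_mul_add_four_mul_sub_two_ne {c : ℝ} (hc : Irrational c) {n : ℤ} (hn : n + 3 ≠ 0) :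
    Int.fract (c * n + (4 * c - 2)) ≠ c := by
  intro h
  have hint : c * ((n + 3 : ℤ) : ℝ) = ((⌊c * n + (4 * c - 2)⌋ + 2 : ℤ) : ℝ) := by
    push_cast
    rw [← Int.self_sub_fract (c * n + (4 * c - 2)), h]
    ring
  exact (hc.mul_intCast hn).ne_int _ hint

theorem floor_eq_zero_or_eq_one_of_mem_Ico {r : ℝ} (h : r ∈ Set.Ico 0 2) : ⌊r⌋ = 0 ∨ ⌊r⌋ = 1 := by
  rcases lt_or_ge r 1 with h1 | h1
  · exact Or.inl (Int.floor_eq_zero_iff.mpr ⟨h.1, h1⟩)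
  · exact Or.inr (Int.floor_eq_iff.mpr ⟨by push_cast; exact h1, by push_cast; linarith [h.2]⟩)

section Gap

variable {c d θ : ℝ}

theorem gap_sub_mem_Ico_of_fract_lt (hc : 2 * c ^ 2 = 1) (hc0 : 0 < c) (hcd : c ≤ d)
    (hd : d ≤ 4 * c - 2) (hθ0 : 0 ≤ θ) (hθ : θ < c) :
    (2 * c + 1) * d - 2 * c * θ - c ∈ Set.Ico 0 2 := by
  constructor <;> nlinarith

theorem gap_sub_lt_one_of_one_sub_le (hc : 2 * c ^ 2 = 1) (hc0 : 0 < c) (hd : d ≤ 4 * c - 2)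
    (hθ : 1 - c ≤ θ) : (2 * c + 1) * d - 2 * c * θ - c < 1 := by
  nlinarith

theorem gap_mem_Ico_of_le_fract (hc : 2 * c ^ 2 = 1) (hc0 : 0 < c) (hcd : c ≤ d)
    (hd : d ≤ 4 * c - 2) (hθ : c ≤ θ) (hθ1 : θ < 1) (hne : ¬(θ = c ∧ d = 4 * c - 2)) :
    (2 * c + 1) * d - 2 * c * θ ∈ Set.Ico 0 1 := by
  have hθc : 0 ≤ 2 * c * (θ - c) := by nlinarith
  have hd4 : 0 ≤ (2 * c + 1) * (4 * c - 2 - d) := by nlinarith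
  refine ⟨by nlinarith, lt_of_not_ge fun h1 => hne ⟨?_, ?_⟩⟩
  · nlinarith
  · nlinarith

end Gap

theorem stmt12 (c d : ℝ) (hc : c = 1 / Real.sqrt 2)
    (hd : d ∈ Set.Icc (Real.sqrt 2 / 2) (2 * (Real.sqrt 2 - 1)))
    (a : ℤ → ℤ) (ha : ∀ n : ℤ, a n = ⌊c * n + d⌋)
    (f : ℤ → ℤ) (hf : ∀ n : ℤ, f n = a n + a (n - 1)) :
    ∀ n : ℤ, 2 ≤ n →
      (a (f n) = n ∨ a (f n) = n + 1) ∧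
      (1 - c ≤ Int.fract (c * n + d) → a (f n) = n) := by
  have hc' : c = √2 / 2 := by rw [hc]; field_simp; rw [Real.sq_sqrt zero_le_two]
  have hc0 : 0 < c := by rw [hc']; positivity
  have hc2 : 2 * c ^ 2 = 1 := by rw [hc', div_pow, Real.sq_sqrt zero_le_two]; norm_num
  have hcd : c ≤ d := hc' ▸ hd.1
  have hd4 : d ≤ 4 * c - 2 := by linarith [hd.2]
  have hirr : Irrational c := by rw [hc, one_div]; exact irrational_sqrt_two.inv
  intro n hn
  have hshift : ⌊c * ((n - 1 : ℤ) : ℝ) + d⌋ = ⌊c * n + d - c⌋ := by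
    congr 1
    push_cast
    ring
  have hfloor (k : ℤ) (hk : f n = 2 * a n - k) :
      a (f n) = n + ⌊(2 * c + 1) * d - 2 * c * Int.fract (c * n + d) - c * k⌋ := by
    rw [ha, hk, ha]
    exact floor_mul_two_floor_sub_add hc2 d n k
  rcases lt_or_ge (Int.fract (c * n + d)) c with hθ | hθ
  · have hfn : f n = 2 * a n - 1 := by
      rw [hf, ha, ha, hshift, floor_sub_eq_floor_sub_one_of_fract_lt (by nlinarith) hθ]
      ring
    rw [hfloor 1 hfn, Int.cast_one, mul_one]
    have hg := gap_sub_mem_Ico_of_fract_lt hc2 hc0 hcd hd4 (Int.fract_nonneg _) hθ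
    refine ⟨?_, fun h1 => ?_⟩
    · rcases floor_eq_zero_or_eq_one_of_mem_Ico hg with h | h <;> simp [h]
    · simp [Int.floor_eq_zero_iff.mpr ⟨hg.1, gap_sub_lt_one_of_one_sub_le hc2 hc0 hd4 h1⟩]
  · have hfn : f n = 2 * a n - 0 := by
      rw [hf, ha, ha, hshift, floor_sub_eq_floor_of_le_fract hc0.le hθ]
      ring
    have hne : ¬(Int.fract (c * n + d) = c ∧ d = 4 * c - 2) := fun ⟨hθc, hd'⟩ =>
      fract_mul_add_four_mul_sub_two_ne hirr (by omega) (hd' ▸ hθc)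
    have hg := gap_mem_Ico_of_le_fract hc2 hc0 hcd hd4 hθ (Int.fract_lt_one _) hne
    rw [hfloor 0 hfn, Int.cast_zero, mul_zero, sub_zero, Int.floor_eq_zero_iff.mpr hg, add_zero]
    exact ⟨Or.inl rfl, fun _ => rfl⟩
end

section
/- Let c = 1/√2 and I = [√2/2, 2(√2-1)]. The sequence a(n) = ⌊cn + d⌋ satisfies the triple-nested identity a(a(a(n) + a(n-1))) = a(n) for all n ≥ 2 if and only if d ∈ I. -/
open Real Set

/-!
Write `x = fract (c n + d)`. Since `2 c² = 1`, the inner value `a (a n + a (n - 1))` equals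
`n + ⌊E x⌋` with `E = nestedShift c d`, which is affine in `x` on each of `[0, c)` and `[c, 1)`;
the identity at `n` then says exactly that `x + c ⌊E x⌋ ∈ [0, 1)`. For `c ≤ d ≤ 4c - 2`
(i.e. `d ∈ [√2/2, 2(√2 - 1)]`) this holds for every `x`, except `x = c` at `d = 4c - 2`, which
irrationality of `c` rules out. For any other `d` it fails on a whole open interval of `x`, and the
orbit `fract (c n + d)`, `n ≥ 2`, enters that interval: Dirichlet's approximation theorem provides
an arbitrarily small nonzero step `k c - j`, and walking with that step crosses every interval
longer than the step.
-/

theorem floor_add_eq_floor_iff (y t : ℝ) : ⌊y + t⌋ = ⌊y⌋ ↔ Int.fract y + t ∈ Ico 0 1 := by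
  rw [← Int.floor_eq_zero_iff, ← add_eq_left (a := ⌊y⌋), ← Int.floor_intCast_add, ← add_assoc,
    Int.floor_add_fract]

theorem exists_nat_add_mul_mem_Ioo_add_int (x : ℝ) {δ u v : ℝ} (hδ : δ ≠ 0)
    (huv : |δ| < v - u) : ∃ m : ℕ, ∃ i : ℤ, x + m * δ ∈ Ioo (u + i) (v + i) := by
  wlog hδ0 : 0 < δ generalizing x δ u v
  · obtain ⟨m, i, hm⟩ := this (-x) (neg_ne_zero.2 hδ) (u := -v) (v := -u)
      (by rwa [abs_neg, sub_neg_eq_add, neg_add_eq_sub])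
      (by simpa using lt_of_le_of_ne (not_lt.1 hδ0) hδ)
    refine ⟨m, -i, ?_, ?_⟩ <;> push_cast <;> linarith [hm.1, hm.2]
  rw [abs_of_pos hδ0] at huv
  obtain ⟨m, hm, -⟩ := existsUnique_add_zsmul_mem_Ioc hδ0 x (u + ⌈x - u⌉)
  rw [zsmul_eq_mul] at hm
  have hxu : x ≤ u + ⌈x - u⌉ := by linarith [Int.le_ceil (x - u)]
  have hm0 : 0 ≤ m := by
    by_contra! h
    have : (m : ℝ) * δ < 0 := mul_neg_of_neg_of_pos (by exact_mod_cast h) hδ0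
    linarith [hm.1]
  lift m to ℕ using hm0
  push_cast at hm
  exact ⟨m, ⌈x - u⌉, hm.1, by linarith [hm.2]⟩

theorem Irrational.exists_fract_mul_add_mem_Ioo {α : ℝ} (hα : Irrational α) (β : ℝ) (N : ℤ)
    {u v : ℝ} (hu : 0 ≤ u) (huv : u < v) (hv : v ≤ 1) :
    ∃ n ≥ N, Int.fract (α * n + β) ∈ Ioo u v := by
  obtain ⟨K, hK⟩ := exists_nat_one_div_lt (sub_pos.2 huv)
  obtain ⟨j, k, hk0, -, hjk⟩ := Real.exists_int_int_abs_mul_sub_le α K.succ_pos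
  have hδ : (k : ℝ) * α - j ≠ 0 := sub_ne_zero.2 ((hα.intCast_mul hk0.ne').ne_int j)
  have hδu : |(k : ℝ) * α - j| < v - u :=
    hjk.trans_lt ((one_div_le_one_div_of_le (by positivity) (by push_cast; linarith)).trans_lt hK)
  obtain ⟨m, i, hm⟩ := exists_nat_add_mul_mem_Ioo_add_int (α * N + β) hδ hδu
  have hfract : Int.fract (α * (N + m * k : ℤ) + β) = α * N + β + m * (k * α - j) - i :=
    Int.fract_eq_iff.2 ⟨by linarith [hm.1], by linarith [hm.2], m * j + i, by push_cast; ring⟩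
  refine ⟨N + m * k, by nlinarith, ?_⟩
  rw [hfract]
  constructor <;> linarith [hm.1, hm.2]

noncomputable def nestedShift (c d x : ℝ) : ℝ :=
  (2 * c + 1) * d - c ^ 2 - c * (x + Int.fract (x - c))

section
variable {c d x : ℝ}

theorem floor_mul_floor_add_floor (hc : 2 * c ^ 2 = 1) (n : ℤ) :
    ⌊c * ((⌊c * n + d⌋ + ⌊c * (n - 1 : ℤ) + d⌋ : ℤ) : ℝ) + d⌋ =
      n + ⌊nestedShift c d (Int.fract (c * n + d))⌋ := by
  have hprev : Int.fract (c * (n - 1 : ℤ) + d) = Int.fract (Int.fract (c * n + d) - c) := by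
    rw [← Int.fract_intCast_add ⌊c * n + d⌋ (_ - c)]
    congr 1
    rw [Int.fract]; push_cast; ring
  have key : c * ((⌊c * n + d⌋ + ⌊c * (n - 1 : ℤ) + d⌋ : ℤ) : ℝ) + d =
      n + nestedShift c d (Int.fract (c * n + d)) := by
    rw [nestedShift, ← hprev]
    simp only [Int.fract]
    push_cast
    linear_combination (n : ℝ) * hc
  rw [key, Int.floor_intCast_add]

theorem nested_eq_iff (hc : 2 * c ^ 2 = 1) {a : ℤ → ℤ} (ha : ∀ n : ℤ, a n = ⌊c * n + d⌋) (n : ℤ) :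
    a (a (a n + a (n - 1))) = a n ↔
      Int.fract (c * n + d) + c * ⌊nestedShift c d (Int.fract (c * n + d))⌋ ∈ Ico 0 1 := by
  rw [← floor_add_eq_floor_iff]
  simp only [ha, floor_mul_floor_add_floor hc]
  push_cast
  ring_nf

theorem nestedShift_of_le (hx : c ≤ x) (hx' : x < c + 1) :
    nestedShift c d x = (2 * c + 1) * d - 2 * c * x := by
  rw [nestedShift, Int.fract_eq_self.2 ⟨by linarith, by linarith⟩]
  ring

theorem nestedShift_of_lt (hx : c - 1 ≤ x) (hx' : x < c) :
    nestedShift c d x = (2 * c + 1) * d - 2 * c * x - c := by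
  have : Int.fract (x - c) = x - c + 1 :=
    Int.fract_eq_iff.2 ⟨by linarith, by linarith, -1, by push_cast; ring⟩
  rw [nestedShift, this]
  ring

theorem add_mul_floor_nestedShift_mem_Ico (hc : 2 * c ^ 2 = 1) (hc0 : 0 < c)
    (hd : d ∈ Icc c (4 * c - 2)) (hx : x ∈ Ico 0 1) (hxc : d = 4 * c - 2 → x ≠ c) :
    x + c * ⌊nestedShift c d x⌋ ∈ Ico 0 1 := by
  obtain ⟨hd₁, hd₂⟩ := hd
  obtain ⟨hx₀, hx₁⟩ := hx
  have hc1 : c < 1 := by nlinarith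
  rcases lt_or_ge x c with hlt | hle
  · rw [nestedShift_of_lt (by linarith) hlt]
    have hpos : 0 ≤ (2 * c + 1) * d - 2 * c * x - c := by nlinarith
    rcases lt_or_ge ((2 * c + 1) * d - 2 * c * x - c) 1 with hE | hE
    · rw [Int.floor_eq_zero_iff.2 ⟨hpos, hE⟩]
      simpa using And.intro hx₀ hx₁
    · have hE₂ : (2 * c + 1) * d - 2 * c * x - c < 2 := by nlinarith
      have : ⌊(2 * c + 1) * d - 2 * c * x - c⌋ = 1 :=
        Int.floor_eq_iff.2 ⟨by exact_mod_cast hE, by push_cast; linarith⟩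
      rw [this]
      constructor <;> push_cast <;> nlinarith
  · rw [nestedShift_of_le hle (by linarith)]
    have hE : (2 * c + 1) * d - 2 * c * x < 1 := by
      rcases hd₂.lt_or_eq with hd₂ | rfl
      · nlinarith
      · nlinarith [lt_of_le_of_ne hle (hxc rfl).symm]
    rw [Int.floor_eq_zero_iff.2 ⟨by nlinarith, hE⟩]
    simpa using And.intro hx₀ hx₁

theorem add_mul_floor_nestedShift_neg (hc0 : 0 < c) (hx : x < c)
    (hE : nestedShift c d x < 0) : x + c * ⌊nestedShift c d x⌋ < 0 := by
  have : (⌊nestedShift c d x⌋ : ℝ) ≤ -1 := by exact_mod_cast Int.floor_le_neg_one_iff.2 hE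
  nlinarith

theorem one_le_add_mul_floor_nestedShift (hc : 1 ≤ 2 * c) (hx : c ≤ x)
    (hE : 1 ≤ nestedShift c d x) : 1 ≤ x + c * ⌊nestedShift c d x⌋ := by
  have : (1 : ℝ) ≤ ⌊nestedShift c d x⌋ := by exact_mod_cast Int.le_floor.2 (by exact_mod_cast hE)
  nlinarith

theorem mem_Icc_of_nested_eq (hc : 2 * c ^ 2 = 1) (hc0 : 0 < c) (hirr : Irrational c)
    {a : ℤ → ℤ} (ha : ∀ n : ℤ, a n = ⌊c * n + d⌋)
    (H : ∀ n : ℤ, 2 ≤ n → a (a (a n + a (n - 1))) = a n) : d ∈ Icc c (4 * c - 2) := by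
  have hc1 : c < 1 := by nlinarith
  simp only [nested_eq_iff hc ha] at H
  by_contra hd
  rw [mem_Icc, not_and_or, not_le, not_le] at hd
  rcases hd with hd | hd
  · obtain ⟨n, hn, hx⟩ := hirr.exists_fract_mul_add_mem_Ioo d 2
      (le_max_right (((2 * c + 1) * d - c) / (2 * c)) 0)
      (max_lt (by rw [div_lt_iff₀ (by positivity)]; nlinarith) hc0) hc1.le
    have hlow := (le_max_left _ _).trans_lt hx.1
    rw [div_lt_iff₀ (by positivity)] at hlow
    have hE : nestedShift c d (Int.fract (c * n + d)) < 0 := by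
      rw [nestedShift_of_lt (by linarith [Int.fract_nonneg (c * n + d)]) hx.2]
      linarith
    exact (add_mul_floor_nestedShift_neg hc0 hx.2 hE).not_ge (H n hn).1
  · obtain ⟨n, hn, hx⟩ := hirr.exists_fract_mul_add_mem_Ioo d 2 hc0.le
      (lt_min (by rw [lt_div_iff₀ (by positivity)]; nlinarith) hc1)
      (min_le_right (((2 * c + 1) * d - 1) / (2 * c)) 1)
    have hupp := hx.2.trans_le (min_le_left _ _)
    rw [lt_div_iff₀ (by positivity)] at hupp
    have hE : 1 ≤ nestedShift c d (Int.fract (c * n + d)) := by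
      rw [nestedShift_of_le hx.1.le (by linarith [Int.fract_lt_one (c * n + d)])]
      linarith
    exact (one_le_add_mul_floor_nestedShift (by nlinarith) hx.1.le hE).not_gt (H n hn).2

theorem nested_eq_of_mem_Icc (hc : 2 * c ^ 2 = 1) (hc0 : 0 < c) (hirr : Irrational c)
    {a : ℤ → ℤ} (ha : ∀ n : ℤ, a n = ⌊c * n + d⌋) (hd : d ∈ Icc c (4 * c - 2)) {n : ℤ}
    (hn : n ≠ -3) : a (a (a n + a (n - 1))) = a n := by
  rw [nested_eq_iff hc ha]
  refine add_mul_floor_nestedShift_mem_Ico hc hc0 hd ⟨Int.fract_nonneg _, Int.fract_lt_one _⟩ ?_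
  -- at `d = 4c - 2`, `fract (c n + d) = c` would make `(n + 3) c` an integer
  rintro rfl hX
  apply (hirr.intCast_mul (m := n + 3) (by omega)).ne_int (⌊c * n + (4 * c - 2)⌋ + 2)
  have := Int.self_sub_fract (c * n + (4 * c - 2))
  rw [hX] at this
  push_cast
  linarith

end

theorem stmt13 (c : ℝ) (hc : c = 1 / Real.sqrt 2) (d : ℝ)
    (a : ℤ → ℤ) (ha : ∀ n : ℤ, a n = ⌊c * n + d⌋) :
    (∀ n : ℤ, 2 ≤ n → a (a (a n + a (n - 1))) = a n) ↔
      d ∈ Set.Icc (Real.sqrt 2 / 2) (2 * (Real.sqrt 2 - 1)) := by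
  have hs : Real.sqrt 2 = 2 * c := by
    rw [hc]; field_simp; norm_num
  have hc0 : 0 < c := by rw [hc]; positivity
  have hc2 : 2 * c ^ 2 = 1 := by rw [hc, div_pow, Real.sq_sqrt zero_le_two]; norm_num
  have hirr : Irrational c := by rw [hc, one_div]; exact irrational_sqrt_two.inv
  rw [hs, mul_div_cancel_left₀ c two_ne_zero, show 2 * (2 * c - 1) = 4 * c - 2 by ring]
  exact ⟨mem_Icc_of_nested_eq hc2 hc0 hirr ha,
    fun hd n hn => nested_eq_of_mem_Icc hc2 hc0 hirr ha hd (by omega)⟩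
end

section
/- Let c = 1/√2 and d < √2/2 with d ≥ 1 - c. Then the identity a(a(a(n) + a(n-1))) = a(n), where a(n) = ⌊cn + d⌋, fails for infinitely many n ≥ 2. -/
/-!
Write `θ = {cn + d}`. When `θ < c` we have `a(n - 1) = a(n) - 1`, and since `2c² = 1`,
`c(2a(n) - 1) + d = n - 1 + (1 + d + 2cd - c - 2cθ)`. For `θ` slightly below `c` the bracket
lies in `[0, 1)` (this is where `1 - c ≤ d < c` enters), so `a(a(n) + a(n - 1)) = n - 1` and
the triple iterate is `a(n - 1) ≠ a(n)`. Since `c` is irrational, Dirichlet's theorem gives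
positive multiples `m` with `{cm}` arbitrarily small and positive, and walking `θ` forward in
such steps shows that `θ_n` enters any interval for arbitrarily large `n`.
-/

open Real Set

lemma exists_nat_add_mul_mem_Ico {x y t : ℝ} (ht : 0 < t) (hxy : x ≤ y) :
    ∃ k : ℕ, x + k * t ∈ Ico y (y + t) := by
  have hq : 0 ≤ (y - x) / t := div_nonneg (by linarith) ht.le
  refine ⟨⌈(y - x) / t⌉₊, ?_, ?_⟩
  · have := mul_le_mul_of_nonneg_right (Nat.le_ceil ((y - x) / t)) ht.le
    rw [div_mul_cancel₀ _ ht.ne'] at this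
    linarith
  · have := mul_lt_mul_of_pos_right (Nat.ceil_lt_add_one hq) ht
    rw [add_mul, div_mul_cancel₀ _ ht.ne'] at this
    linarith

lemma Irrational.exists_pos_fract_mul_lt {ξ ε : ℝ} (hξ : Irrational ξ) (hε : 0 < ε) :
    ∃ m : ℤ, 0 < m ∧ 0 < Int.fract (ξ * m) ∧ Int.fract (ξ * m) < ε := by
  obtain ⟨n, hn⟩ := exists_nat_one_div_lt hε
  obtain ⟨j, k, hk, -, hjk⟩ := Real.exists_int_int_abs_mul_sub_le ξ n.succ_pos
  rw [mul_comm] at hjk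
  have hδε : |ξ * k - j| < ε :=
    (hjk.trans (one_div_le_one_div_of_le (by positivity) (by push_cast; linarith))).trans_lt hn
  have hδ : ξ * k - j ≠ 0 := ((hξ.mul_intCast hk.ne').sub_intCast j).ne_zero
  have hδ1 : |ξ * k - j| < 1 := hjk.trans_lt <| by
    rw [div_lt_one (by positivity)]; push_cast; linarith
  rcases hδ.lt_or_gt with hneg | hpos
  · -- `ξ k` lies just below an integer, so the fractional parts of the multiples of `ξ k`
    -- descend from `1` in steps `< ε`; stop at the one landing in `(0, j - ξ k]`.
    rw [abs_of_neg hneg] at hδε hδ1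
    obtain ⟨i, hi₁, hi₂⟩ := exists_nat_add_mul_mem_Ico (neg_pos.2 hneg)
      (by linarith : (0 : ℝ) ≤ 1 + (ξ * k - j))
    have hi : (0 : ℝ) < i := by nlinarith
    have hfract : Int.fract (ξ * (i * k : ℤ)) = 1 + i * (ξ * k - j) :=
      Int.fract_eq_iff.2 ⟨by linarith, by nlinarith, i * j - 1, by push_cast; ring⟩
    refine ⟨i * k, mul_pos (by exact_mod_cast hi) hk, ?_, ?_⟩ <;> rw [hfract] <;> linarith
  · rw [abs_of_pos hpos] at hδε hδ1
    have hfract : Int.fract (ξ * k) = ξ * k - j :=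
      Int.fract_eq_iff.2 ⟨hpos.le, hδ1, j, by ring⟩
    exact ⟨k, hk, hfract ▸ hpos, hfract ▸ hδε⟩

lemma exists_ge_fract_mul_add_mem_Ico {ξ x y : ℝ} {m : ℤ} (hm : 0 ≤ m)
    (ht : 0 < Int.fract (ξ * m)) (hy : 0 ≤ y) (hyt : y + Int.fract (ξ * m) ≤ 1) (N : ℤ) :
    ∃ n ≥ N, Int.fract (ξ * n + x) ∈ Ico y (y + Int.fract (ξ * m)) := by
  set t := Int.fract (ξ * m)
  set x₀ := Int.fract (ξ * N + x)
  obtain ⟨k, hk₁, hk₂⟩ := exists_nat_add_mul_mem_Ico ht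
    (by linarith [Int.fract_lt_one (ξ * N + x)] : x₀ ≤ y + 1)
  have hfract : Int.fract (ξ * (N + k * m : ℤ) + x) = x₀ + k * t - 1 := by
    refine Int.fract_eq_iff.2
      ⟨by linarith, by linarith, ⌊ξ * N + x⌋ + k * ⌊ξ * m⌋ + 1, ?_⟩
    have h₁ := Int.self_sub_fract (ξ * N + x)
    have h₂ := Int.self_sub_fract (ξ * m)
    push_cast
    linear_combination h₁ + (k : ℝ) * h₂
  refine ⟨N + k * m, by nlinarith, ?_⟩
  rw [hfract]
  constructor <;> linarith

lemma Irrational.exists_ge_fract_mul_add_mem_Ioo {ξ a b : ℝ} (hξ : Irrational ξ) (ha : 0 ≤ a)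
    (hab : a < b) (hb : b ≤ 1) (x : ℝ) (N : ℤ) :
    ∃ n ≥ N, Int.fract (ξ * n + x) ∈ Ioo a b := by
  obtain ⟨m, hm, ht, htab⟩ := hξ.exists_pos_fract_mul_lt (sub_pos.2 hab)
  obtain ⟨n, hn, h₁, h₂⟩ :=
    exists_ge_fract_mul_add_mem_Ico (x := x) (y := b - Int.fract (ξ * m)) hm.le ht
      (by linarith) (by linarith) N
  exact ⟨n, hn, by linarith, by linarith⟩

lemma Int.floor_sub_of_fract_lt {x c : ℝ} (h : Int.fract x < c) (hc : c ≤ 1) :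
    ⌊x - c⌋ = ⌊x⌋ - 1 := by
  have := Int.self_sub_floor x
  rw [Int.floor_eq_iff]
  push_cast
  constructor <;> linarith [Int.fract_nonneg x]

lemma beatty_iterate_ne {c d : ℝ} {a : ℤ → ℤ} (ha : ∀ n : ℤ, a n = ⌊c * n + d⌋)
    (hc0 : 0 < c) (hc2 : 2 * c ^ 2 = 1) (hd : 1 - c ≤ d) {n : ℤ}
    (hθ : Int.fract (c * n + d) ∈ Ioo ((d + 2 * c * d - c) / (2 * c)) c) :
    a (a (a n + a (n - 1))) ≠ a n := by
  obtain ⟨hlo, hhi⟩ := hθ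
  set θ := Int.fract (c * n + d)
  rw [div_lt_iff₀ (by positivity), mul_comm] at hlo
  have hprev : a (n - 1) = a n - 1 := by
    rw [ha, ha, ← Int.floor_sub_of_fract_lt hhi (by nlinarith)]
    push_cast
    ring_nf
  have han : (a n : ℝ) = c * n + d - θ := by rw [ha, ← Int.self_sub_fract]
  have hθc : 2 * c * θ < 1 := by nlinarith
  have hd' : 0 ≤ d + 2 * c * d - c := by nlinarith
  have hback : a (a n + a (n - 1)) = n - 1 := by
    have hval : c * ((a n + a (n - 1) : ℤ) : ℝ) + d =
        n - 1 + (1 + d + 2 * c * d - c - 2 * c * θ) := by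
      rw [hprev]
      push_cast
      rw [han]
      linear_combination (n : ℝ) * hc2
    rw [ha, Int.floor_eq_iff, hval]
    push_cast
    constructor <;> linarith
  rw [hback, hprev]
  omega

theorem stmt14 (c d : ℝ) (hc : c = 1 / Real.sqrt 2)
    (hd1 : 1 - c ≤ d) (hd2 : d < Real.sqrt 2 / 2)
    (a : ℤ → ℤ) (ha : ∀ n : ℤ, a n = ⌊c * n + d⌋) :
    {n : ℤ | 2 ≤ n ∧ a (a (a n + a (n - 1))) ≠ a n}.Infinite := by
  have hc0 : 0 < c := by rw [hc]; positivity
  have hc2 : 2 * c ^ 2 = 1 := by rw [hc, div_pow, sq_sqrt zero_le_two]; norm_num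
  have hirr : Irrational c := by rw [hc, one_div]; exact irrational_sqrt_two.inv
  have hdc : d < c := by rwa [hc, ← sqrt_div_self']
  refine Set.infinite_of_forall_exists_gt fun N ↦ ?_
  obtain ⟨n, hn, hθ⟩ := hirr.exists_ge_fract_mul_add_mem_Ioo (b := c)
    (div_nonneg (by nlinarith) (by positivity) : 0 ≤ (d + 2 * c * d - c) / (2 * c))
    ((div_lt_iff₀ (by positivity)).2 (by nlinarith)) (by nlinarith) d (max (N + 1) 2)
  exact ⟨n, ⟨by omega, beatty_iterate_ne ha hc0 hc2 hd1 hθ⟩, by omega⟩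
end

section
/- Let c = 1/√2 and d > 2(√2 - 1) with d < 2 - c. Then the identity a(a(a(n) + a(n-1))) = a(n), where a(n) = ⌊cn + d⌋, fails for infinitely many n ≥ 2. -/
open Real

theorem stmt15 (c d : ℝ) (hc : c = 1 / Real.sqrt 2)
    (hd1 : 2 * (Real.sqrt 2 - 1) < d) (hd2 : d < 2 - c)
    (a : ℤ → ℤ) (ha : ∀ n : ℤ, a n = ⌊c * n + d⌋) :
    {n : ℤ | 2 ≤ n ∧ a (a (a n + a (n - 1))) ≠ a n}.Infinite := by
  have s2 : Real.sqrt 2 * Real.sqrt 2 = 2 := Real.mul_self_sqrt (by norm_num)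
  have s2pos : 0 < Real.sqrt 2 := Real.sqrt_pos.2 (by norm_num)
  have s2gt : 1 < Real.sqrt 2 := by nlinarith
  have hc2 : c * Real.sqrt 2 = 1 := by rw [hc]; field_simp
  have hcpos : 0 < c := by rw [hc]; positivity
  have hcc : 2 * (c * c) = 1 := by nlinarith
  have hclt : c < 1 := by nlinarith
  have hc1 : 1 < 2 * c := by nlinarith
  -- irrationality of c in the needed linear form
  have hirr : ∀ p q : ℤ, p ≠ 0 → (p : ℝ) * c + q ≠ 0 := by
    intro p q hp h
    rcases eq_or_ne q 0 with hq | hq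
    · rw [hq] at h
      push_cast at h
      have : (p : ℝ) ≠ 0 := Int.cast_ne_zero.2 hp
      have hc0 : c = 0 := by
        rcases mul_eq_zero.1 (by linarith : (p : ℝ) * c = 0) with h' | h'
        · exact absurd h' this
        · exact h'
      rw [hc0] at hcpos; exact lt_irrefl 0 hcpos
    ·
      have hp' : (p : ℝ) ≠ 0 := Int.cast_ne_zero.2 hp
      have hq' : (q : ℝ) ≠ 0 := Int.cast_ne_zero.2 hq
      -- p * c = -q, multiply by √2 : p = -q * √2, so √2 = -p/q
      have h2 : (p : ℝ) = -q * Real.sqrt 2 := by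
        have := congrArg (· * Real.sqrt 2) (by linarith : (p : ℝ) * c = -q)
        calc (p : ℝ) = p * (c * Real.sqrt 2) := by rw [hc2]; ring
          _ = -q * Real.sqrt 2 := by nlinarith [this]
      have : Real.sqrt 2 = ((-p : ℚ) / (q : ℚ) : ℚ) := by
        push_cast
        field_simp
        linarith [h2]
      exact irrational_sqrt_two ⟨(-p : ℚ) / (q : ℚ), this.symm⟩
  -- the upper end of the failure window
  set U : ℝ := min ((d * (1 + 2 * c) - 1) / (2 * c)) 1 with hUdef
  have hcU : c < U := by
    have h1 : c < (d * (1 + 2 * c) - 1) / (2 * c) := by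
      rw [lt_div_iff₀ (by linarith : (0:ℝ) < 2 * c)]
      -- need c * (2c) = 1 < d(1+2c) - 1, i.e. d(1+2c) > 2
      -- d > 2(√2 - 1), 1 + 2c = 1 + √2
      have h2c : 2 * c = Real.sqrt 2 := by nlinarith
      rw [h2c]
      nlinarith
    exact lt_min h1 hclt
  have hU1 : U ≤ 1 := min_le_right _ _
  -- key failure lemma
  have hfail : ∀ n : ℤ, c < Int.fract (c * n + d) → Int.fract (c * n + d) < U →
      a (a (a n + a (n - 1))) ≠ a n := by
    intro n h1 h2
    set θ := Int.fract (c * n + d) with hθdef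
    have hθ1 : θ < 1 := Int.fract_lt_one _
    have hA : ((⌊c * n + d⌋ : ℤ) : ℝ) = c * n + d - θ := by
      rw [hθdef, Int.self_sub_fract]
    -- a (n-1) = a n
    have e1 : a (n - 1) = a n := by
      rw [ha, ha]
      have hx : c * ((n : ℤ) - 1 : ℤ) + d = (c * n + d) - c := by push_cast; ring
      rw [hx]
      rw [Int.floor_eq_iff]
      constructor
      · linarith [hA]
      · push_cast
        linarith [hA]
    have e2 : a n + a (n - 1) = 2 * ⌊c * n + d⌋ := by rw [e1, ha]; ring
    set K : ℤ := ⌊d * (1 + 2 * c) - 2 * c * θ⌋ with hKdef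
    have hKval : a (a n + a (n - 1)) = n + K := by
      rw [e2, ha]
      have hx : c * ((2 * ⌊c * n + d⌋ : ℤ) : ℝ) + d
          = (d * (1 + 2 * c) - 2 * c * θ) + (n : ℤ) := by
        push_cast [hA]
        linear_combination (n : ℝ) * hcc
      rw [hx, Int.floor_add_intCast, hKdef]
      ring
    have hK1 : 1 ≤ K := by
      rw [hKdef]
      rw [Int.le_floor]
      push_cast
      have h2' : θ < (d * (1 + 2 * c) - 1) / (2 * c) :=
        lt_of_lt_of_le h2 (min_le_left _ _)
      rw [lt_div_iff₀ (by linarith : (0:ℝ) < 2 * c)] at h2'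
      nlinarith
    have e3 : a (n + K) = ⌊θ + c * K⌋ + ⌊c * n + d⌋ := by
      rw [ha]
      have hx : c * ((n + K : ℤ) : ℝ) + d = (θ + c * K) + (⌊c * n + d⌋ : ℤ) := by
        push_cast [hA]
        ring
      rw [hx, Int.floor_add_intCast]
    have hfl : 1 ≤ ⌊θ + c * K⌋ := by
      rw [Int.le_floor]
      push_cast
      have hKr : (1 : ℝ) ≤ (K : ℝ) := by exact_mod_cast hK1
      nlinarith
    rw [hKval, e3, ha]
    omega
  -- density: small positive elements p*c + q with p ≥ 1
  have hdense : ∀ ε : ℝ, 0 < ε → ε < 1 / 2 →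
      ∃ p q : ℤ, 1 ≤ p ∧ 0 < (p : ℝ) * c + q ∧ (p : ℝ) * c + q < ε := by
    intro ε hε hε2
    obtain ⟨p, q, hpq0, hpqε, hp0⟩ :
        ∃ p q : ℤ, 0 < (p : ℝ) * c + q ∧ (p : ℝ) * c + q < ε ∧ p ≠ 0 := by
      rcases (AddSubgroup.closure ({c, 1} : Set ℝ)).dense_or_cyclic with hd | ⟨g0, hg0⟩
      · obtain ⟨x, hx1, hx2⟩ := hd.exists_mem_open isOpen_Ioo (Set.nonempty_Ioo.2 hε)
        obtain ⟨p, q, hpq⟩ := AddSubgroup.mem_closure_pair.1 hx1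
        simp only [zsmul_eq_mul, mul_one] at hpq
        refine ⟨p, q, ?_, ?_, ?_⟩
        · rw [hpq]; exact hx2.1
        · rw [hpq]; exact hx2.2
        · intro h0
          rw [h0] at hpq
          push_cast at hpq
          have hq1 : (0 : ℝ) < q := by rw [← hpq] at hx2; linarith [hx2.1]
          have hq2 : (q : ℝ) < 1 := by rw [← hpq] at hx2; linarith [hx2.2, hε2]
          have : (0 : ℤ) < q := by exact_mod_cast hq1
          have : q < 1 := by exact_mod_cast hq2
          omega
      · exfalso
        have hcm : c ∈ AddSubgroup.closure ({c, 1} : Set ℝ) :=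
          AddSubgroup.subset_closure (by simp)
        have h1m : (1 : ℝ) ∈ AddSubgroup.closure ({c, 1} : Set ℝ) :=
          AddSubgroup.subset_closure (by simp)
        rw [hg0, AddSubgroup.mem_closure_singleton] at hcm h1m
        obtain ⟨mc, hmc⟩ := hcm
        obtain ⟨m1, hm1⟩ := h1m
        simp only [zsmul_eq_mul] at hmc hm1
        have hm1ne : m1 ≠ 0 := by
          intro h; rw [h] at hm1; push_cast at hm1; linarith
        -- m1 * c = m1 * mc * g0 = mc * (m1 * g0) = mc
        have : (m1 : ℝ) * c + (-mc : ℤ) = 0 := by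
          push_cast
          linear_combination (mc : ℝ) * hm1 - (m1 : ℝ) * hmc
        exact hirr m1 (-mc) hm1ne this
    rcases le_or_gt 1 p with hp1 | hp1
    · exact ⟨p, q, hp1, hpq0, hpqε⟩
    · -- p ≤ -1, flip via 1 - K * x
      have hpneg : p ≤ -1 := by omega
      set x : ℝ := (p : ℝ) * c + q with hxdef
      set K : ℤ := ⌊1 / x⌋ with hKdef
      have hK2 : 2 ≤ K := by
        rw [hKdef, Int.le_floor]
        push_cast
        rw [le_div_iff₀ hpq0]
        linarith
      have hKx1 : (K : ℝ) * x ≤ 1 := by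
        have := Int.floor_le (1 / x)
        calc (K : ℝ) * x ≤ (1 / x) * x := by
              apply mul_le_mul_of_nonneg_right _ (le_of_lt hpq0)
              rw [hKdef]; exact this
          _ = 1 := by field_simp
      have hKx2 : 1 < ((K : ℝ) + 1) * x := by
        have := Int.lt_floor_add_one (1 / x)
        calc (1 : ℝ) = (1 / x) * x := by field_simp
          _ < ((K : ℝ) + 1) * x := by
              apply mul_lt_mul_of_pos_right _ hpq0
              rw [hKdef]; exact_mod_cast this
      have hkp : 1 ≤ -K * p := by nlinarith
      have hval : ((-K * p : ℤ) : ℝ) * c + ((1 - K * q : ℤ) : ℝ) = 1 - K * x := by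
        rw [hxdef]; push_cast; ring
      have hne : (1 : ℝ) - K * x ≠ 0 := by
        rw [← hval]
        exact hirr (-K * p) (1 - K * q) (by omega)
      refine ⟨-K * p, 1 - K * q, hkp, ?_, ?_⟩
      · rw [hval]
        exact lt_of_le_of_ne (by linarith) (Ne.symm hne)
      · rw [hval]
        linarith
  -- for every N there is a failing n ≥ N
  have hex : ∀ N : ℤ, ∃ n : ℤ, N ≤ n ∧ 2 ≤ n ∧ c < Int.fract (c * n + d) ∧
      Int.fract (c * n + d) < U := by
    intro N
    set N' : ℤ := max N 2 with hN'def
    set x0 : ℝ := c * N' + d with hx0def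
    set m : ℤ := ⌈x0⌉ with hmdef
    have hUc : 0 < U - c := by linarith
    obtain ⟨p, q, hp1, hg0, hgε⟩ := hdense (min (U - c) (1 / 2) / 2)
      (by positivity) (by
        have : min (U - c) (1 / 2) ≤ 1 / 2 := min_le_right _ _
        linarith)
    set g : ℝ := (p : ℝ) * c + q with hgdef
    have hgU : g < U - c := by
      have : min (U - c) (1 / 2) ≤ U - c := min_le_left _ _
      linarith
    set t : ℝ := ((m : ℝ) + c - x0) / g with htdef
    have ht0 : 0 ≤ t := by
      apply div_nonneg _ (le_of_lt hg0)
      have := Int.le_ceil x0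
      rw [hmdef]
      linarith
    set k : ℤ := ⌊t⌋ + 1 with hkdef
    have hk1 : 1 ≤ k := by
      rw [hkdef]
      have : (0 : ℤ) ≤ ⌊t⌋ := Int.le_floor.2 (by exact_mod_cast ht0)
      omega
    have hkt1 : t < (k : ℝ) := by
      rw [hkdef]; push_cast; exact Int.lt_floor_add_one t
    have hkt2 : (k : ℝ) ≤ t + 1 := by
      rw [hkdef]; push_cast
      linarith [Int.floor_le t]
    have htg : t * g = (m : ℝ) + c - x0 := by
      rw [htdef]; field_simp
    have hlow : (m : ℝ) + c < x0 + k * g := by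
      have := mul_lt_mul_of_pos_right hkt1 hg0
      rw [htg] at this
      linarith
    have hhigh : x0 + k * g < (m : ℝ) + U := by
      have h1 := mul_le_mul_of_nonneg_right hkt2 (le_of_lt hg0)
      have h2 : (t + 1) * g = t * g + g := by ring
      rw [h2, htg] at h1
      linarith
    have hkp : 1 ≤ k * p := by
      calc (1 : ℤ) = 1 * 1 := by ring
        _ ≤ k * p := mul_le_mul hk1 hp1 (by norm_num) (by omega)
    refine ⟨N' + k * p, ?_, ?_, ?_, ?_⟩
    · have : N ≤ N' := le_max_left _ _
      omega
    · have : (2 : ℤ) ≤ N' := le_max_right _ _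
      omega
    all_goals {
      have hval : c * ((N' + k * p : ℤ) : ℝ) + d = (x0 + k * g) - ((k * q : ℤ) : ℝ) := by
        rw [hx0def, hgdef]; push_cast; ring
      have hfr : Int.fract (c * ((N' + k * p : ℤ) : ℝ) + d) = x0 + k * g - m := by
        rw [hval, Int.fract_sub_intCast]
        have hfloor : ⌊x0 + k * g⌋ = m := by
          rw [Int.floor_eq_iff]
          constructor
          · linarith
          · push_cast
            linarith
        rw [Int.fract, hfloor]
      rw [hfr]
      push_cast at hlow hhigh ⊢
      first
        | linarith
        | linarith }
  -- conclude infinitude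
  apply Set.infinite_of_not_bddAbove
  rintro ⟨B, hB⟩
  obtain ⟨n, hn1, hn2, hn3, hn4⟩ := hex (B + 1)
  have hmem : n ∈ {n : ℤ | 2 ≤ n ∧ a (a (a n + a (n - 1))) ≠ a n} :=
    ⟨hn2, hfail n hn3 hn4⟩
  have := hB hmem
  omega
end

section
/- Let c = 1/√3. The sequence a(n) = ⌊cn + d⌋ satisfies a(a(a(n) + a(n-1) + a(n-2))) = a(n) for all n ≥ 3 if and only if d ∈ [(√3+3)/6, (5√3-3)/6]. -/
/-!
Put `x = {c m + d}` and `D = (3c + 1) d`. Since `3c² = 1`, `a (m + k) = a m + ⌊x + c k⌋` and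
`3c · a m = m + 3c (d - x)`, so the identity at `n = m + 2` depends on `x` alone: it says
`⌊x + c K⌋ = ⌊x + 2c⌋` with `K = nestedOffset c D x`. Cutting `[0, 1)` at `1 - c` and `2 - 2c`,
one checks that for `D ∈ [1 + 2c, 2 + c]` (the interval of the theorem) this holds for all `x`,
except at `x = 1 - c` when `D = 2 + c`, a value `{c m + d}` cannot take because `c` is irrational.
For other `D` it fails on an open interval of `x`, which the dense orbit `{c m + d}`, `m ≥ 1`, meets.
-/

open Real Set

lemma exists_nat_add_mul_mem_Ioo {z s u v : ℝ} (hs : 0 < s) (hsuv : s < v - u) (hz : z ≤ u) :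
    ∃ t : ℕ, z + t * s ∈ Ioo u v := by
  have hq : 0 ≤ (u - z) / s := div_nonneg (by linarith) hs.le
  refine ⟨⌊(u - z) / s⌋₊ + 1, ?_, ?_⟩
  · have := mul_lt_mul_of_pos_right (Nat.lt_floor_add_one ((u - z) / s)) hs
    rw [div_mul_cancel₀ _ hs.ne'] at this
    push_cast
    linarith
  · have := mul_le_mul_of_nonneg_right (Nat.floor_le hq) hs.le
    rw [div_mul_cancel₀ _ hs.ne'] at this
    push_cast
    linarith

lemma exists_nat_fract_add_mul_mem_Ioo {s u v : ℝ} (hs : s ≠ 0) (hsuv : |s| < v - u)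
    (hu : 0 ≤ u) (hv : v ≤ 1) (z : ℝ) : ∃ t : ℕ, Int.fract (z + t * s) ∈ Ioo u v := by
  suffices ∃ t : ℕ, ∃ j : ℤ, z + t * s - j ∈ Ioo u v by
    obtain ⟨t, j, hmem⟩ := this
    refine ⟨t, ?_⟩
    rwa [← Int.fract_sub_intCast _ j,
      Int.fract_eq_self.mpr ⟨by linarith [hmem.1], by linarith [hmem.2]⟩]
  rcases hs.lt_or_gt with hneg | hpos
  · obtain ⟨t, ht⟩ := exists_nat_add_mul_mem_Ioo (z := -z) (u := -v - (⌊z⌋ - 1))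
      (v := -u - (⌊z⌋ - 1)) (neg_pos.mpr hneg) (by rw [abs_of_neg hneg] at hsuv; linarith)
      (by linarith [Int.floor_le z])
    exact ⟨t, ⌊z⌋ - 1, by push_cast at ht ⊢; constructor <;> linarith [ht.1, ht.2]⟩
  · obtain ⟨t, ht⟩ := exists_nat_add_mul_mem_Ioo (z := z) (u := u + ⌈z⌉) (v := v + ⌈z⌉) hpos
      (by rw [abs_of_pos hpos] at hsuv; linarith) (by linarith [Int.le_ceil z])
    exact ⟨t, ⌈z⌉, by constructor <;> linarith [ht.1, ht.2]⟩

lemma exists_pos_fract_mul_add_mem_Ioo {c : ℝ} (hc : Irrational c) (d : ℝ) {u v : ℝ}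
    (hu : 0 ≤ u) (huv : u < v) (hv : v ≤ 1) :
    ∃ m : ℤ, 0 < m ∧ Int.fract (c * m + d) ∈ Ioo u v := by
  obtain ⟨N, hN⟩ := exists_nat_one_div_lt (sub_pos.mpr huv)
  obtain ⟨j, k, hk, -, hjk⟩ := Real.exists_int_int_abs_mul_sub_le c N.succ_pos
  have hs : (k : ℝ) * c - j ≠ 0 := sub_ne_zero.mpr ((hc.intCast_mul hk.ne').ne_int j)
  have hsuv : |(k : ℝ) * c - j| < v - u := by
    refine hjk.trans_lt (lt_of_le_of_lt ?_ hN)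
    gcongr
    linarith
  obtain ⟨t, ht⟩ := exists_nat_fract_add_mul_mem_Ioo hs hsuv hu hv (c + d)
  refine ⟨1 + t * k, by positivity, ?_⟩
  rw [← Int.fract_sub_intCast _ (t * j)]
  convert ht using 2
  push_cast
  ring

noncomputable def nestedOffset (c D x : ℝ) : ℤ :=
  ⌊D - 3 * c * x + c * ((⌊x + c⌋ + ⌊x + 2 * c⌋ : ℤ) : ℝ)⌋

lemma floor_mul_intCast_add_add (c d : ℝ) (m k : ℤ) :
    ⌊c * ((m + k : ℤ) : ℝ) + d⌋ = ⌊c * m + d⌋ + ⌊Int.fract (c * m + d) + c * k⌋ := by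
  rw [← Int.floor_intCast_add, Int.fract]
  congr 1
  push_cast
  ring

lemma apply_apply_sum_eq_iff {c d : ℝ} {a : ℤ → ℤ} (hc : 3 * c ^ 2 = 1)
    (ha : ∀ n, a n = ⌊c * n + d⌋) (m : ℤ) :
    a (a (a (m + 2) + a (m + 1) + a m)) = a (m + 2) ↔
      ⌊Int.fract (c * m + d) + c * nestedOffset c ((3 * c + 1) * d) (Int.fract (c * m + d))⌋ =
        ⌊Int.fract (c * m + d) + 2 * c⌋ := by
  set x := Int.fract (c * m + d) with hx
  have hshift (k : ℤ) : a (m + k) = a m + ⌊x + c * k⌋ := by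
    rw [ha, ha, floor_mul_intCast_add_add]
  have ham : (a m : ℝ) = c * m + d - x := by
    rw [ha, hx, Int.fract]
    ring
  have hsum : a (a (m + 2) + a (m + 1) + a m) = m + nestedOffset c ((3 * c + 1) * d) x := by
    have h : a (m + 2) + a (m + 1) + a m = 3 * a m + (⌊x + c⌋ + ⌊x + 2 * c⌋) := by
      rw [hshift 2, hshift 1]
      push_cast
      rw [mul_one, mul_comm c 2]
      ring
    rw [h, ha, nestedOffset]
    push_cast
    rw [ham, ← Int.floor_intCast_add]
    congr 1
    linear_combination (m : ℝ) * hc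
  rw [hsum, hshift, hshift 2]
  push_cast
  rw [mul_comm c 2]
  exact add_right_inj _

section

variable {c D x : ℝ}

lemma bounds_of_three_mul_sq_eq_one (hc : 3 * c ^ 2 = 1) (hc0 : 0 < c) : 1 / 2 < c ∧ c < 2 / 3 :=
  ⟨by nlinarith, by nlinarith⟩

lemma floor_add_mul_nestedOffset_of_lt (hc : 3 * c ^ 2 = 1) (hc0 : 0 < c)
    (hD : D ∈ Icc (1 + 2 * c) (2 + c)) (hx0 : 0 ≤ x) (hx : x < 1 - c) :
    ⌊x + c * nestedOffset c D x⌋ = ⌊x + 2 * c⌋ := by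
  obtain ⟨hc1, hc2⟩ := bounds_of_three_mul_sq_eq_one hc hc0
  have h1 : ⌊x + c⌋ = 0 := Int.floor_eq_zero_iff.mpr ⟨by linarith, by linarith⟩
  have h2 : ⌊x + 2 * c⌋ = 1 := Int.floor_eq_iff.mpr ⟨by push_cast; linarith, by push_cast; linarith⟩
  rw [nestedOffset, h1, h2, show ((0 + 1 : ℤ) : ℝ) = 1 by norm_num]
  have hK := Int.floor_le (D - 3 * c * x + c * 1)
  have hK' := Int.lt_floor_add_one (D - 3 * c * x + c * 1)
  rw [Int.floor_eq_iff]
  push_cast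
  constructor <;> nlinarith [hD.1, hD.2]

lemma floor_add_mul_nestedOffset_of_mem_Ico (hc : 3 * c ^ 2 = 1) (hc0 : 0 < c)
    (hD : D ∈ Icc (1 + 2 * c) (2 + c)) (hxD : D = 2 + c → x ≠ 1 - c) (hx : 1 - c ≤ x)
    (hx' : x < 2 - 2 * c) : ⌊x + c * nestedOffset c D x⌋ = ⌊x + 2 * c⌋ := by
  obtain ⟨hc1, hc2⟩ := bounds_of_three_mul_sq_eq_one hc hc0
  have h1 : ⌊x + c⌋ = 1 := Int.floor_eq_iff.mpr ⟨by push_cast; linarith, by push_cast; linarith⟩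
  have h2 : ⌊x + 2 * c⌋ = 1 := Int.floor_eq_iff.mpr ⟨by push_cast; linarith, by push_cast; linarith⟩
  rw [nestedOffset, h1, h2, show ((1 + 1 : ℤ) : ℝ) = 2 by norm_num]
  set K := ⌊D - 3 * c * x + c * 2⌋
  have hK := Int.lt_floor_add_one (D - 3 * c * x + c * 2)
  have hK2 : (K : ℝ) ≤ 2 := by
    have hy : D - 3 * c * x + c * 2 < (3 : ℤ) := by
      push_cast
      rcases hD.2.lt_or_eq with hlt | heq
      · nlinarith
      · nlinarith [lt_of_le_of_ne hx (hxD heq).symm]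
    exact_mod_cast Int.lt_add_one_iff.mp (Int.floor_lt.mpr hy)
  rw [Int.floor_eq_iff]
  push_cast
  constructor <;> nlinarith [hD.1, hD.2]

lemma floor_add_mul_nestedOffset_of_le (hc : 3 * c ^ 2 = 1) (hc0 : 0 < c)
    (hD : D ∈ Icc (1 + 2 * c) (2 + c)) (hx : 2 - 2 * c ≤ x) (hx1 : x < 1) :
    ⌊x + c * nestedOffset c D x⌋ = ⌊x + 2 * c⌋ := by
  obtain ⟨hc1, hc2⟩ := bounds_of_three_mul_sq_eq_one hc hc0
  have h1 : ⌊x + c⌋ = 1 := Int.floor_eq_iff.mpr ⟨by push_cast; linarith, by push_cast; linarith⟩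
  have h2 : ⌊x + 2 * c⌋ = 2 := Int.floor_eq_iff.mpr ⟨by push_cast; linarith, by push_cast; linarith⟩
  have hK : nestedOffset c D x = 2 := by
    rw [nestedOffset, h1, h2, Int.floor_eq_iff]
    push_cast
    constructor <;> nlinarith [hD.1, hD.2]
  rw [hK, h2, Int.floor_eq_iff]
  push_cast
  constructor <;> linarith

lemma floor_add_mul_nestedOffset_eq (hc : 3 * c ^ 2 = 1) (hc0 : 0 < c)
    (hD : D ∈ Icc (1 + 2 * c) (2 + c)) (hxD : D = 2 + c → x ≠ 1 - c) (hx0 : 0 ≤ x) (hx1 : x < 1) :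
    ⌊x + c * nestedOffset c D x⌋ = ⌊x + 2 * c⌋ := by
  rcases lt_or_ge x (1 - c) with hA | hA
  · exact floor_add_mul_nestedOffset_of_lt hc hc0 hD hx0 hA
  rcases lt_or_ge x (2 - 2 * c) with hB | hB
  · exact floor_add_mul_nestedOffset_of_mem_Ico hc hc0 hD hxD hA hB
  · exact floor_add_mul_nestedOffset_of_le hc hc0 hD hB hx1

/- Since `1 / (3c) = c`, the bounds `c (D + c - 2)` and `c (D + 2c - 3)` on `x` below are where
the floor defining `nestedOffset` passes 2, resp. 3. -/
lemma floor_add_mul_nestedOffset_ne_of_lt (hc : 3 * c ^ 2 = 1) (hc0 : 0 < c)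
    (hx0 : 0 ≤ x) (hx : x < 1 - c) (hxD : c * (D + c - 2) < x) :
    ⌊x + c * nestedOffset c D x⌋ ≠ ⌊x + 2 * c⌋ := by
  obtain ⟨hc1, hc2⟩ := bounds_of_three_mul_sq_eq_one hc hc0
  have h1 : ⌊x + c⌋ = 0 := Int.floor_eq_zero_iff.mpr ⟨by linarith, by linarith⟩
  have h2 : ⌊x + 2 * c⌋ = 1 := Int.floor_eq_iff.mpr ⟨by push_cast; linarith, by push_cast; linarith⟩
  have hK : nestedOffset c D x ≤ 1 := by
    rw [nestedOffset, h1, h2, ← Int.lt_add_one_iff, Int.floor_lt]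
    push_cast
    nlinarith
  have hK' : (nestedOffset c D x : ℝ) ≤ 1 := by exact_mod_cast hK
  rw [h2]
  have : ⌊x + c * nestedOffset c D x⌋ < 1 := Int.floor_lt.mpr (by push_cast; nlinarith)
  omega

lemma floor_add_mul_nestedOffset_ne_of_gt (hc : 3 * c ^ 2 = 1) (hc0 : 0 < c)
    (hx : 1 - c < x) (hx' : x < 2 - 2 * c) (hxD : x < c * (D + 2 * c - 3)) :
    ⌊x + c * nestedOffset c D x⌋ ≠ ⌊x + 2 * c⌋ := by
  obtain ⟨hc1, hc2⟩ := bounds_of_three_mul_sq_eq_one hc hc0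
  have h1 : ⌊x + c⌋ = 1 := Int.floor_eq_iff.mpr ⟨by push_cast; linarith, by push_cast; linarith⟩
  have h2 : ⌊x + 2 * c⌋ = 1 := Int.floor_eq_iff.mpr ⟨by push_cast; linarith, by push_cast; linarith⟩
  have hK : 3 ≤ nestedOffset c D x := by
    rw [nestedOffset, h1, h2, Int.le_floor]
    push_cast
    nlinarith
  have hK' : (3 : ℝ) ≤ nestedOffset c D x := by exact_mod_cast hK
  rw [h2]
  have : 2 ≤ ⌊x + c * nestedOffset c D x⌋ := Int.le_floor.mpr (by push_cast; nlinarith)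
  omega

lemma exists_Ioo_floor_add_mul_nestedOffset_ne (hc : 3 * c ^ 2 = 1) (hc0 : 0 < c)
    (hD : D ∉ Icc (1 + 2 * c) (2 + c)) :
    ∃ u v, 0 ≤ u ∧ u < v ∧ v ≤ 1 ∧ ∀ x ∈ Ioo u v, ⌊x + c * nestedOffset c D x⌋ ≠ ⌊x + 2 * c⌋ := by
  obtain ⟨hc1, hc2⟩ := bounds_of_three_mul_sq_eq_one hc hc0
  simp only [mem_Icc, not_and_or, not_le] at hD
  rcases hD with hD | hD
  · refine ⟨max 0 (c * (D + c - 2)), 1 - c, le_max_left _ _, max_lt (by linarith) (by nlinarith),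
      by linarith, fun x hx => ?_⟩
    exact floor_add_mul_nestedOffset_ne_of_lt hc hc0 ((le_max_left _ _).trans hx.1.le) hx.2
      ((le_max_right _ _).trans_lt hx.1)
  · refine ⟨1 - c, min (2 - 2 * c) (c * (D + 2 * c - 3)), by linarith,
      lt_min (by linarith) (by nlinarith), (min_le_left _ _).trans (by linarith), fun x hx => ?_⟩
    exact floor_add_mul_nestedOffset_ne_of_gt hc hc0 hx.1 (hx.2.trans_le (min_le_left _ _))
      (hx.2.trans_le (min_le_right _ _))

end

lemma fract_mul_add_ne_one_sub {c d : ℝ} (hc : 3 * c ^ 2 = 1) (hirr : Irrational c)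
    (hd : (3 * c + 1) * d = 2 + c) (m : ℤ) : Int.fract (c * m + d) ≠ 1 - c := by
  intro h
  set N := ⌊c * m + d⌋ + 1
  have hN : c * (m + 1) + d = N := by
    have := Int.floor_add_fract (c * m + d)
    rw [h] at this
    push_cast [N]
    linarith
  have key : c * ((3 * N - m - 2 : ℤ) : ℝ) = ((m + 3 - N : ℤ) : ℝ) := by
    push_cast
    linear_combination (m + 1 : ℝ) * hc + hd - (3 * c + 1) * hN
  by_cases hk : 3 * N - m - 2 = 0
  · rw [hk, Int.cast_zero, mul_zero, eq_comm, Int.cast_eq_zero] at key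
    omega
  · exact (hirr.mul_intCast hk).ne_int _ key

theorem stmt16 (c : ℝ) (hc : c = 1 / Real.sqrt 3) (d : ℝ)
    (a : ℤ → ℤ) (ha : ∀ n : ℤ, a n = ⌊c * n + d⌋) :
    (∀ n : ℤ, 3 ≤ n → a (a (a n + a (n - 1) + a (n - 2))) = a n) ↔
      d ∈ Set.Icc ((Real.sqrt 3 + 3) / 6) ((5 * Real.sqrt 3 - 3) / 6) := by
  have hs : √3 ^ 2 = 3 := sq_sqrt (by norm_num)
  have hc0 : 0 < c := by rw [hc]; positivity
  have h3c : 3 * c = √3 := by rw [hc]; field_simp; linarith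
  have hc2 : 3 * c ^ 2 = 1 := by nlinarith
  have hirr : Irrational c := by
    rw [hc, one_div]
    exact_mod_cast Nat.prime_three.irrational_sqrt.inv
  have hd_iff : d ∈ Icc ((√3 + 3) / 6) ((5 * √3 - 3) / 6) ↔
      (3 * c + 1) * d ∈ Icc (1 + 2 * c) (2 + c) := by
    rw [h3c]
    constructor <;> rintro ⟨h1, h2⟩ <;> constructor <;> nlinarith
  rw [hd_iff]
  constructor
  · intro h
    by_contra hD
    obtain ⟨u, v, hu, huv, hv, hne⟩ := exists_Ioo_floor_add_mul_nestedOffset_ne hc2 hc0 hD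
    obtain ⟨m, hm, hx⟩ := exists_pos_fract_mul_add_mem_Ioo hirr d hu huv hv
    refine hne _ hx ((apply_apply_sum_eq_iff hc2 ha m).mp ?_)
    simpa [show m + 2 - 1 = m + 1 by ring] using h (m + 2) (by omega)
  · intro hD n hn
    obtain ⟨m, rfl⟩ : ∃ m, n = m + 2 := ⟨n - 2, by ring⟩
    rw [show m + 2 - 1 = m + 1 by ring, add_sub_cancel_right, apply_apply_sum_eq_iff hc2 ha]
    exact floor_add_mul_nestedOffset_eq hc2 hc0 hD (fun h => fract_mul_add_ne_one_sub hc2 hirr h m)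
      (Int.fract_nonneg _) (Int.fract_lt_one _)
end

section
/- Let c = 1/√2, d = 2(√2 - 1), a(n) = ⌊cn + d⌋, f(n) = a(n) + a(n-1), and θ_n = {cn + d}. Then for all n ≥ 2: a(f(n)) = n + 1 if and only if θ_{n-1} ∈ [1 - c, 1/2]; moreover whenever a(f(n)) = n + 1 one has a(n+1) = a(n). -/
open Real

/-!
Write `θ = θ_{n-1}`, so that `θ_n = {θ + c}`. Expanding the floors in `f(n)` and using
`2c² = 1`, `d = 4c - 2` gives `c f(n) + d = n + 1 + c² - c (θ + {θ + c})`, hence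
`a(f(n)) - n = ⌊1 + c² - c (θ + {θ + c})⌋`. As `c` is irrational, `θ ≠ 0`. If `θ < 1 - c` the
floor is `⌊1 - 2cθ⌋ = 0`; otherwise it is `⌊1 + c - 2cθ⌋`, which is `1` exactly when `θ ≤ 1/2`.
In that case `θ_n + c ≤ 2c - 1/2 < 1`, so `a(n+1) = a(n)`.
-/

theorem Irrational.fract_ne_zero {x : ℝ} (h : Irrational x) : Int.fract x ≠ 0 := by
  rw [Int.fract, sub_ne_zero]
  exact h.ne_int _

section FloorRing

variable {R : Type*} [Ring R] [LinearOrder R] [IsStrictOrderedRing R] [FloorRing R]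

theorem Int.floor_add_eq_floor_add_floor_fract_add (x y : R) :
    ⌊x + y⌋ = ⌊x⌋ + ⌊Int.fract x + y⌋ := by
  conv_lhs => rw [← Int.floor_add_fract x, add_assoc, Int.floor_intCast_add]

theorem Int.fract_add_eq_fract_fract_add (x y : R) :
    Int.fract (x + y) = Int.fract (Int.fract x + y) := by
  conv_lhs => rw [← Int.floor_add_fract x, add_assoc, Int.fract_intCast_add]

end FloorRing

theorem floor_one_add_mul_self_sub_eq_one_iff {c θ : ℝ} (hc0 : 0 < c) (hc1 : c < 1)
    (hθ0 : 0 < θ) (hθ1 : θ < 1) :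
    ⌊1 + c * c - c * (θ + Int.fract (θ + c))⌋ = 1 ↔ θ ∈ Set.Icc (1 - c) (1 / 2) := by
  rcases lt_or_ge θ (1 - c) with hlt | hge
  · rw [Int.fract_eq_self.2 ⟨by linarith, by linarith⟩]
    have hzero : ⌊1 + c * c - c * (θ + (θ + c))⌋ = 0 :=
      Int.floor_eq_zero_iff.2 ⟨by nlinarith [sq_nonneg (2 * c - 1)], by nlinarith⟩
    simp only [hzero, zero_ne_one, false_iff, Set.mem_Icc, not_and_or, not_le]
    exact Or.inl hlt
  · have hfract : Int.fract (θ + c) = θ + c - 1 := by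
      rw [← Int.fract_sub_one, Int.fract_eq_self]
      constructor <;> linarith
    have hval : 1 + c * c - c * (θ + Int.fract (θ + c)) = 1 + c * (1 - 2 * θ) := by
      rw [hfract]; ring
    rw [hval, Int.floor_eq_iff, Set.mem_Icc]
    push_cast
    constructor
    · rintro ⟨hle, -⟩
      exact ⟨hge, by nlinarith⟩
    · rintro ⟨-, hle⟩
      constructor <;> nlinarith

theorem floor_fract_add_add_eq_zero {c θ : ℝ} (hc : c < 3 / 4)
    (hθ : θ ∈ Set.Icc (1 - c) (1 / 2)) : ⌊Int.fract (θ + c) + c⌋ = 0 := by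
  obtain ⟨hlo, hhi⟩ := hθ
  have hfract : Int.fract (θ + c) = θ + c - 1 := by
    rw [← Int.fract_sub_one, Int.fract_eq_self]
    constructor <;> linarith
  rw [Int.floor_eq_zero_iff, hfract]
  constructor <;> linarith

theorem mul_floor_add_floor_add_eq {c d x : ℝ} {n : ℤ} (hcc : c * c = 1 / 2)
    (hd : d = 4 * c - 2) (hx : x = c * ((n : ℝ) - 1) + d) :
    c * ((⌊x + c⌋ + ⌊x⌋ : ℤ) : ℝ) + d =
      n + (1 + c * c - c * (Int.fract x + Int.fract (Int.fract x + c))) := by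
  rw [← Int.fract_add_eq_fract_fract_add]
  push_cast
  rw [← Int.self_sub_fract, ← Int.self_sub_fract x]
  linear_combination (2 * (n : ℝ) + 6) * hcc + (2 * c + 1) * hd + 2 * c * hx

theorem stmt17 (c d : ℝ) (hc : c = 1 / Real.sqrt 2)
    (hd : d = 2 * (Real.sqrt 2 - 1))
    (a : ℤ → ℤ) (ha : ∀ n : ℤ, a n = ⌊c * n + d⌋)
    (f : ℤ → ℤ) (hf : ∀ n : ℤ, f n = a n + a (n - 1)) :
    ∀ n : ℤ, 2 ≤ n →
      (a (f n) = n + 1 ↔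
        Int.fract (c * ((n : ℝ) - 1) + d) ∈ Set.Icc (1 - c) (1 / 2)) ∧
      (a (f n) = n + 1 → a (n + 1) = a n) := by
  have hc0 : 0 < c := by rw [hc]; positivity
  have hcc : c * c = 1 / 2 := by
    rw [hc, div_mul_div_comm, one_mul, mul_self_sqrt zero_le_two]
  have hd' : d = 4 * c - 2 := by
    rw [hd, hc]
    field_simp
    linear_combination 2 * mul_self_sqrt (zero_le_two (α := ℝ))
  have hirr : Irrational c := by rw [hc, one_div]; exact irrational_sqrt_two.inv
  intro n hn
  set x := c * ((n : ℝ) - 1) + d with hx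
  have ha_pred : a (n - 1) = ⌊x⌋ := by rw [ha]; push_cast; rfl
  have ha_self : a n = ⌊x + c⌋ := by rw [ha, hx]; ring_nf
  have ha_succ : a (n + 1) = ⌊x + c + c⌋ := by rw [ha, hx]; push_cast; ring_nf
  have hθ : 0 < Int.fract x := by
    have hx' : x = c * ((n + 3 : ℤ) : ℝ) - ((2 : ℤ) : ℝ) := by push_cast; rw [hx, hd']; ring
    refine (Int.fract_nonneg x).lt_of_ne (Ne.symm ?_)
    rw [hx']
    exact ((hirr.mul_intCast (by omega)).sub_intCast 2).fract_ne_zero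
  have hdefect : a (f n) = n + 1 ↔ Int.fract x ∈ Set.Icc (1 - c) (1 / 2) := by
    rw [← floor_one_add_mul_self_sub_eq_one_iff hc0 (by nlinarith) hθ (Int.fract_lt_one x), ha,
      hf, ha_self, ha_pred, mul_floor_add_floor_add_eq hcc hd' hx, Int.floor_intCast_add]
    omega
  refine ⟨hdefect, fun h => ?_⟩
  rw [ha_succ, ha_self, Int.floor_add_eq_floor_add_floor_fract_add (x + c),
    Int.fract_add_eq_fract_fract_add, floor_fract_add_add_eq_zero (by nlinarith) (hdefect.1 h),
    add_zero]
end
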